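/- arXiv:1806.05998 — 8 statements merged into one kernel-verified Lean document; each statement's English description precedes it below -/
import Mathlib

section
/- Cauchy's double alternant: det_{1≤j,m≤k}( 1/(1 - x_j y_m) ) = det_{1≤j,m≤k}(x_j^{m-1}) · det_{1≤j,m≤k}(y_j^{m-1}) / Π_{j,m=1}^k (1 - x_j y_m). -/
open Finset

section CauchyAux
open Matrix

theorem prod_Ioi_castSucc' (k : ℕ) (a : Fin k) (f : Fin (k+1) → ℂ) :
    ∏ j ∈ Ioi (a.castSucc), f j = (∏ j ∈ Ioi a, f j.castSucc) * f (Fin.last k) := by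
  have : (Ioi (a.castSucc) : Finset (Fin (k+1))) = insert (Fin.last k) ((Ioi a).map Fin.castSuccEmb) := by
    ext j
    induction j using Fin.lastCases with
    | last => simp [Fin.castSucc_lt_last]
    | cast i =>
      simp only [mem_Ioi, Fin.castSucc_lt_castSucc_iff, mem_insert, mem_map,
        Fin.coe_castSuccEmb]
      constructor
      · intro hi; exact Or.inr ⟨i, by simpa using hi, rfl⟩
      · rintro (hl | ⟨b, hb, hbe⟩)
        · exact absurd hl (Fin.castSucc_lt_last i).ne
        · rw [Fin.castSucc_inj] at hbe; subst hbe; simpa using hb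
  rw [this, Finset.prod_insert, Finset.prod_map]
  · rw [mul_comm]; rfl
  · intro hmem
    obtain ⟨b, -, hb⟩ := mem_map.mp hmem
    exact (Fin.castSucc_lt_last b).ne hb

theorem vandermonde_det_succ (k : ℕ) (x : Fin (k+1) → ℂ) :
    det (vandermonde x) = det (vandermonde (fun j : Fin k => x j.castSucc)) *
      ∏ j : Fin k, (x (Fin.last k) - x j.castSucc) := by
  rw [det_vandermonde, det_vandermonde]
  rw [Fin.prod_univ_castSucc
    (f := fun i => ∏ j ∈ Ioi i, (x j - x i))]
  have hlast : (Ioi (Fin.last k) : Finset (Fin (k+1))) = ∅ := by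
    ext j; simp [Fin.lt_iff_val_lt_val, Fin.is_le]
  rw [hlast]
  simp only [prod_empty, mul_one]
  rw [← Finset.prod_mul_distrib]
  congr 1
  ext i
  rw [prod_Ioi_castSucc' k i (fun j => x j - x i.castSucc)]

theorem cauchy_key : ∀ (k : ℕ) (x y : Fin k → ℂ), (∀ j m, 1 - x j * y m ≠ 0) →
    det (of fun j m => (1 - x j * y m)⁻¹) * ∏ j, ∏ m, (1 - x j * y m)
      = det (vandermonde x) * det (vandermonde y) := by
  intro k
  induction k with
  | zero =>
    intro x y h
    simp [Matrix.det_isEmpty]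
  | succ k ih =>
    intro x y h
    set L := Fin.last k with hLdef
    set u : Fin (k+1) → ℂ := fun j => if j = L then 1 else x j - x L with hu_def
    set v : Fin (k+1) → ℂ := fun m => (1 - x L * y m)⁻¹ with hv_def
    set C : Matrix (Fin (k+1)) (Fin (k+1)) ℂ :=
      of fun j m => if j = L then 1 else y m * (1 - x j * y m)⁻¹ with hC_def
    set p : Fin (k+1) → ℂ := fun j => if j = L then 1 else (1 - x j * y L)⁻¹ with hp_def
    set q : Fin (k+1) → ℂ := fun m => if m = L then 1 else y m - y L with hq_def
    set E : Matrix (Fin (k+1)) (Fin (k+1)) ℂ :=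
      of fun j m => if j = L then (if m = L then (1:ℂ) else 0)
        else (if m = L then y L else (1 - x j * y m)⁻¹) with hE_def
    -- Step 1: row operations
    have hAB : det (of fun j m : Fin (k+1) => (1 - x j * y m)⁻¹)
        = det (of fun j m : Fin (k+1) => u j * (v m * C j m)) := by
      apply det_eq_of_forall_row_eq_smul_add_const
        (c := fun j => if j = L then 0 else 1) (k := L) (by simp)
      intro i j
      simp only [of_apply, hu_def, hv_def, hC_def]
      by_cases hi : i = L
      · simp [hi]
      · simp only [if_neg hi, if_pos rfl, if_true]
        have h1 := h i j
        have h2 := h L j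
        have h3 : 1 - y j * x L ≠ 0 := by rwa [mul_comm]
        field_simp
        ring
    -- Step 2: factor rows and columns
    have hB : det (of fun j m : Fin (k+1) => u j * (v m * C j m))
        = (∏ j, u j) * ((∏ m, v m) * det C) := by
      rw [show (of fun j m : Fin (k+1) => u j * (v m * C j m))
          = of fun j m => u j * ((of fun j' m' : Fin (k+1) => v m' * C j' m') j m) from rfl,
        det_mul_column, det_mul_row]
    -- Step 3: column operations on C
    have hCD : det C = det (of fun j m : Fin (k+1) => p j * (q m * E j m)) := by
      rw [← det_transpose C, ← det_transpose (of fun j m : Fin (k+1) => p j * (q m * E j m))]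
      apply det_eq_of_forall_row_eq_smul_add_const
        (c := fun m => if m = L then 0 else 1) (k := L) (by simp)
      intro m j
      simp only [transpose_apply, of_apply, hp_def, hq_def, hE_def, hC_def]
      by_cases hm : m = L
      · subst hm
        by_cases hj : j = L <;> simp [hj, mul_comm]
      · simp only [if_neg hm, if_pos rfl, if_true]
        by_cases hj : j = L
        · simp [hj]
        · simp only [if_neg hj]
          have h1 := h j m
          have h2 := h j L
          have h3 : 1 - y m * x j ≠ 0 := by rwa [mul_comm]
          field_simp
          ring
    -- Step 4: factor
    have hD : det (of fun j m : Fin (k+1) => p j * (q m * E j m))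
        = (∏ j, p j) * ((∏ m, q m) * det E) := by
      rw [show (of fun j m : Fin (k+1) => p j * (q m * E j m))
          = of fun j m => p j * ((of fun j' m' : Fin (k+1) => q m' * E j' m') j m) from rfl,
        det_mul_column, det_mul_row]
    -- Step 5: expand along the last row
    have hE : det E = det (of fun j m : Fin k =>
        (1 - x j.castSucc * y m.castSucc)⁻¹) := by
      rw [det_succ_row E L]
      rw [Finset.sum_eq_single L]
      · have hEL : E L L = 1 := by simp [hE_def]
        rw [hEL]
        have : ((-1 : ℂ)) ^ ((L : ℕ) + (L : ℕ)) = 1 := Even.neg_one_pow ⟨(L : ℕ), rfl⟩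
        rw [this, one_mul, one_mul]
        congr 1
        ext j m
        simp only [submatrix_apply, hLdef, Fin.succAbove_last, hE_def, of_apply]
        rw [if_neg (Fin.castSucc_lt_last j).ne, if_neg (Fin.castSucc_lt_last m).ne]
      · intro b _ hb
        have : E L b = 0 := by simp [hE_def, hb]
        simp [this]
      · simp
    -- products of the factors
    have hlastne : ∀ j : Fin k, j.castSucc ≠ L := fun j => (Fin.castSucc_lt_last j).ne
    have hu : ∏ j, u j = ∏ j : Fin k, (x j.castSucc - x L) := by
      rw [Fin.prod_univ_castSucc (f := u)]
      simp [hu_def, hlastne _, hLdef]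
    have hq2 : ∏ m, q m = ∏ m : Fin k, (y m.castSucc - y L) := by
      rw [Fin.prod_univ_castSucc (f := q)]
      simp [hq_def, hlastne _, hLdef]
    have hv : ∏ m, v m = (∏ m : Fin (k+1), (1 - x L * y m))⁻¹ := by
      rw [hv_def, ← Finset.prod_inv_distrib]
    have hp2 : ∏ j, p j = (∏ j : Fin k, (1 - x j.castSucc * y L))⁻¹ := by
      rw [Fin.prod_univ_castSucc (f := p)]
      simp only [hp_def, hlastne _, if_neg, if_pos, mul_one]
      rw [← Finset.prod_inv_distrib]
      simp [hlastne _, hLdef]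
    -- split the big product
    have hP : (∏ j : Fin (k+1), ∏ m : Fin (k+1), (1 - x j * y m))
        = (∏ j : Fin k, ∏ m : Fin k, (1 - x j.castSucc * y m.castSucc))
          * (∏ j : Fin k, (1 - x j.castSucc * y L))
          * (∏ m : Fin (k+1), (1 - x L * y m)) := by
      rw [Fin.prod_univ_castSucc (f := fun j => ∏ m, (1 - x j * y m))]
      congr 1
      rw [← Finset.prod_mul_distrib]
      refine Finset.prod_congr rfl fun j _ => ?_
      rw [Fin.prod_univ_castSucc (f := fun m => (1 - x j.castSucc * y m))]
    have hQ1 : (∏ m : Fin (k+1), (1 - x L * y m)) ≠ 0 :=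
      Finset.prod_ne_zero_iff.mpr fun m _ => h L m
    have hQ2 : (∏ j : Fin k, (1 - x j.castSucc * y L)) ≠ 0 :=
      Finset.prod_ne_zero_iff.mpr fun j _ => h j.castSucc L
    have hIH := ih (fun j => x j.castSucc) (fun m => y m.castSucc)
      (fun j m => h j.castSucc m.castSucc)
    -- assemble
    rw [hAB, hB, hCD, hD, hE, hu, hq2, hv, hp2, hP,
      vandermonde_det_succ k x, vandermonde_det_succ k y]
    have hsign : (∏ j : Fin k, (x j.castSucc - x L)) * (∏ m : Fin k, (y m.castSucc - y L))
        = (∏ j : Fin k, (x L - x j.castSucc)) * (∏ m : Fin k, (y L - y m.castSucc)) := by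
      rw [← Finset.prod_mul_distrib, ← Finset.prod_mul_distrib]
      exact Finset.prod_congr rfl fun i _ => by ring
    calc (∏ j : Fin k, (x j.castSucc - x L)) *
          ((∏ m : Fin (k+1), (1 - x L * y m))⁻¹ *
            ((∏ j : Fin k, (1 - x j.castSucc * y L))⁻¹ *
              ((∏ m : Fin k, (y m.castSucc - y L)) *
                det (of fun j m : Fin k => (1 - x j.castSucc * y m.castSucc)⁻¹)))) *
          ((∏ j : Fin k, ∏ m : Fin k, (1 - x j.castSucc * y m.castSucc))
            * (∏ j : Fin k, (1 - x j.castSucc * y L))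
            * (∏ m : Fin (k+1), (1 - x L * y m)))
        = ((∏ j : Fin k, (x j.castSucc - x L)) * (∏ m : Fin k, (y m.castSucc - y L)))
          * (det (of fun j m : Fin k => (1 - x j.castSucc * y m.castSucc)⁻¹)
              * ∏ j : Fin k, ∏ m : Fin k, (1 - x j.castSucc * y m.castSucc))
          * ((∏ m : Fin (k+1), (1 - x L * y m))⁻¹ * (∏ m : Fin (k+1), (1 - x L * y m)))
          * ((∏ j : Fin k, (1 - x j.castSucc * y L))⁻¹ *
              (∏ j : Fin k, (1 - x j.castSucc * y L))) := by ring
      _ = ((∏ j : Fin k, (x L - x j.castSucc)) * (∏ m : Fin k, (y L - y m.castSucc)))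
          * (det (vandermonde fun j : Fin k => x j.castSucc)
              * det (vandermonde fun m : Fin k => y m.castSucc)) := by
          rw [inv_mul_cancel₀ hQ1, inv_mul_cancel₀ hQ2, hIH, hsign, mul_one, mul_one]
      _ = det (vandermonde fun j : Fin k => x j.castSucc) *
            (∏ j : Fin k, (x L - x j.castSucc)) *
            (det (vandermonde fun m : Fin k => y m.castSucc) *
              ∏ m : Fin k, (y L - y m.castSucc)) := by ring

end CauchyAux

/-- Cauchy's double alternant:
`det(1/(1 - x_j y_m)) = det(x_j^{m-1}) det(y_j^{m-1}) / ∏_{j,m}(1 - x_j y_m)`. -/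
theorem cauchy_double_alternant (k : ℕ) (x y : Fin k → ℂ)
    (h : ∀ j m : Fin k, x j * y m ≠ 1) :
    Matrix.det (Matrix.of fun j m : Fin k => (1 - x j * y m)⁻¹)
      = Matrix.det (Matrix.vandermonde x) * Matrix.det (Matrix.vandermonde y) /
          ∏ j, ∏ m, (1 - x j * y m) := by
  have h' : ∀ j m : Fin k, 1 - x j * y m ≠ 0 := fun j m => sub_ne_zero_of_ne (h j m).symm
  have hP : (∏ j, ∏ m, (1 - x j * y m)) ≠ 0 :=
    Finset.prod_ne_zero_iff.mpr fun j _ =>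
      Finset.prod_ne_zero_iff.mpr fun m _ => h' j m
  rw [eq_div_iff hP]
  exact cauchy_key k x y h'
end

section
/- Let Φ_H(x) = (Π_{1≤j<m≤k}(x_m - x_j))^2 · exp(-Σ_j x_j^2/2) on ℝ^k and write ⟨f⟩ = ∫_{ℝ^k} f(x) Φ_H(x) dx. Then ⟨Σ_{j=1}^k x_j^2⟩ = k^2 ⟨1⟩. -/
open Finset MeasureTheory

/-- The Hermite weight `Φ_H(x) = (∏_{j<m}(x_m - x_j))² e^{-∑_j x_j²/2}`. -/
noncomputable def hermiteWeight {k : ℕ} (x : Fin k → ℝ) : ℝ :=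
  (∏ p ∈ Finset.univ.filter (fun p : Fin k × Fin k => p.1 < p.2), (x p.2 - x p.1)) ^ 2 *
    Real.exp (-∑ j, x j ^ 2 / 2)

namespace HermiteAux

variable {k : ℕ}

/-- The Vandermonde factor. -/
noncomputable def V (k : ℕ) (x : Fin k → ℝ) : ℝ :=
  ∏ p ∈ Finset.univ.filter (fun p : Fin k × Fin k => p.1 < p.2), (x p.2 - x p.1)

/-- Number of ordered pairs `j < m`. -/
def n (k : ℕ) : ℕ := ((Finset.univ : Finset (Fin k × Fin k)).filter
  (fun p : Fin k × Fin k => p.1 < p.2)).card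

lemma two_n_add_k : 2 * n k + k = k ^ 2 := by
  classical
  have h1 : ((Finset.univ : Finset (Fin k × Fin k)).filter
      (fun p => p.1 < p.2)).card
      = ((Finset.univ : Finset (Fin k × Fin k)).filter (fun p => p.2 < p.1)).card := by
    apply Finset.card_nbij' Prod.swap Prod.swap <;> simp [Set.MapsTo, Set.LeftInvOn, Set.RightInvOn, Set.EqOn, Prod.swap]
  have h2 : ((Finset.univ : Finset (Fin k × Fin k)).filter (fun p => p.1 < p.2)).card
      + ((Finset.univ : Finset (Fin k × Fin k)).filter (fun p => ¬ p.1 < p.2)).card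
      = k * k := by
    rw [Finset.card_filter_add_card_filter_not]
    simp
  have h3 : ((Finset.univ : Finset (Fin k × Fin k)).filter (fun p => ¬ p.1 < p.2)).card
      = ((Finset.univ : Finset (Fin k × Fin k)).filter (fun p => p.2 < p.1)).card + k := by
    have hsplit : (((Finset.univ : Finset (Fin k × Fin k)).filter (fun p => ¬ p.1 < p.2)).filter
          (fun p => p.2 < p.1)).card
        + (((Finset.univ : Finset (Fin k × Fin k)).filter (fun p => ¬ p.1 < p.2)).filter
          (fun p => ¬ p.2 < p.1)).card
        = ((Finset.univ : Finset (Fin k × Fin k)).filter (fun p => ¬ p.1 < p.2)).card :=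
      Finset.card_filter_add_card_filter_not _
    have e1 : (((Finset.univ : Finset (Fin k × Fin k)).filter (fun p => ¬ p.1 < p.2)).filter
          (fun p => p.2 < p.1))
        = ((Finset.univ : Finset (Fin k × Fin k)).filter (fun p => p.2 < p.1)) := by
      ext p
      simp only [Finset.mem_filter, Finset.mem_univ, true_and]
      exact ⟨fun h => h.2, fun h => ⟨asymm h, h⟩⟩
    have e2 : (((Finset.univ : Finset (Fin k × Fin k)).filter (fun p => ¬ p.1 < p.2)).filter
          (fun p => ¬ p.2 < p.1)).card = k := by
      have heq : (((Finset.univ : Finset (Fin k × Fin k)).filter (fun p => ¬ p.1 < p.2)).filter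
          (fun p => ¬ p.2 < p.1)) = (Finset.univ : Finset (Fin k)).image (fun j => (j, j)) := by
        ext p
        simp only [Finset.mem_filter, Finset.mem_univ, true_and, Finset.mem_image]
        constructor
        · rintro ⟨ha, hb⟩
          refine ⟨p.1, ?_⟩
          have hpe : p.1 = p.2 := le_antisymm (not_lt.1 hb) (not_lt.1 ha)
          rw [Prod.ext_iff]
          exact ⟨rfl, hpe⟩
        · rintro ⟨j, rfl⟩
          simp
      rw [heq, Finset.card_image_of_injective _ (fun a b h => by simpa using (Prod.mk.inj h).1)]
      simp
    rw [e1, e2] at hsplit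
    omega
  rw [pow_two]
  unfold n
  omega

lemma V_smul (t : ℝ) (x : Fin k → ℝ) : V k (t • x) = t ^ n k * V k x := by
  unfold V n
  rw [← Finset.prod_const, ← Finset.prod_mul_distrib]
  refine Finset.prod_congr rfl fun p _ => ?_
  simp [Pi.smul_apply, smul_eq_mul]; ring

lemma contV : Continuous (V k) := by
  unfold V
  exact continuous_finset_prod _ fun p _ =>
    ((continuous_apply p.2).sub (continuous_apply p.1))

lemma contS : Continuous (fun x : Fin k → ℝ => ∑ j, x j ^ 2) :=
  continuous_finset_sum _ fun j _ => (continuous_apply j).pow 2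

/-- One-dimensional integrability of `(1+u²)^m e^{-a u²}`. -/
lemma int1D (m : ℕ) {a : ℝ} (ha : 0 < a) :
    Integrable (fun u : ℝ => (1 + u ^ 2) ^ m * Real.exp (-a * u ^ 2)) := by
  set ε : ℝ := a / (2 * (m + 1)) with hε
  have hεpos : 0 < ε := by positivity
  have hbase : Integrable (fun u : ℝ => Real.exp (-(a / 2) * u ^ 2)) := by
    simpa [sq] using integrable_exp_neg_mul_sq (half_pos ha)
  refine (hbase.const_mul ((ε⁻¹ + 1) ^ m)).mono'
    (Continuous.aestronglyMeasurable (by continuity)) ?_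
  filter_upwards with u
  have h1 : (1 + u ^ 2 : ℝ) ≤ (ε⁻¹ + 1) * Real.exp (ε * u ^ 2) := by
    have hexp : 1 + ε * u ^ 2 ≤ Real.exp (ε * u ^ 2) := by
      have := Real.add_one_le_exp (ε * u ^ 2); linarith
    have h2 : (ε⁻¹ + 1) * (1 + ε * u ^ 2) ≤ (ε⁻¹ + 1) * Real.exp (ε * u ^ 2) := by
      apply mul_le_mul_of_nonneg_left hexp; positivity
    have h3 : (1 + u ^ 2 : ℝ) ≤ (ε⁻¹ + 1) * (1 + ε * u ^ 2) := by
      have hh : (ε⁻¹ + 1) * (1 + ε * u ^ 2) = ε⁻¹ + 1 + (ε⁻¹ * ε) * u ^ 2 + ε * u ^ 2 := by ring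
      rw [hh, inv_mul_cancel₀ (ne_of_gt hεpos)]
      nlinarith [sq_nonneg u, hεpos.le, inv_nonneg.2 hεpos.le]
    linarith
  have h4 : ((1 + u ^ 2) ^ m : ℝ) ≤ ((ε⁻¹ + 1) * Real.exp (ε * u ^ 2)) ^ m :=
    pow_le_pow_left₀ (by positivity) h1 m
  have h5 : (m : ℝ) * ε ≤ a / 2 := by
    have hm : (m : ℝ) / (2 * (m + 1)) ≤ 1 / 2 := by
      rw [div_le_div_iff₀ (by positivity) (by norm_num)]
      push_cast; linarith
    calc (m : ℝ) * ε = a * ((m : ℝ) / (2 * (m + 1))) := by rw [hε]; ring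
      _ ≤ a * (1 / 2) := mul_le_mul_of_nonneg_left hm ha.le
      _ = a / 2 := by ring
  calc ‖(1 + u ^ 2) ^ m * Real.exp (-a * u ^ 2)‖
      = (1 + u ^ 2) ^ m * Real.exp (-a * u ^ 2) := by
        rw [Real.norm_eq_abs, abs_of_nonneg]; positivity
    _ ≤ ((ε⁻¹ + 1) * Real.exp (ε * u ^ 2)) ^ m * Real.exp (-a * u ^ 2) :=
        mul_le_mul_of_nonneg_right h4 (Real.exp_nonneg _)
    _ = (ε⁻¹ + 1) ^ m * (Real.exp ((m : ℝ) * (ε * u ^ 2)) * Real.exp (-a * u ^ 2)) := by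
        rw [mul_pow, ← Real.exp_nat_mul]; ring
    _ = (ε⁻¹ + 1) ^ m * Real.exp (((m : ℝ) * ε - a) * u ^ 2) := by
        rw [← Real.exp_add]
        have hh : (m : ℝ) * (ε * u ^ 2) + -a * u ^ 2 = ((m : ℝ) * ε - a) * u ^ 2 := by ring
        rw [hh]
    _ ≤ (ε⁻¹ + 1) ^ m * Real.exp (-(a / 2) * u ^ 2) := by
        apply mul_le_mul_of_nonneg_left _ (by positivity)
        apply Real.exp_le_exp.2
        nlinarith [mul_le_mul_of_nonneg_right h5 (sq_nonneg u)]

/-- Integrability of the product bound on `ℝ^k`. -/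
lemma intProd (m : ℕ) {a : ℝ} (ha : 0 < a) :
    Integrable (fun x : Fin k → ℝ =>
      ∏ j, ((1 + x j ^ 2) ^ m * Real.exp (-a * x j ^ 2))) :=
  Integrable.fintype_prod (fun _ => int1D m ha)

/-- Products of `1 + xⱼ²` are at least one. -/
lemma one_le_prodQ (s : Finset (Fin k)) (x : Fin k → ℝ) : 1 ≤ ∏ j ∈ s, (1 + x j ^ 2) := by
  have h := Finset.prod_le_prod (s := s) (f := fun _ => (1 : ℝ)) (g := fun j => 1 + x j ^ 2)
    (fun _ _ => zero_le_one) (fun j _ => by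
      show (1 : ℝ) ≤ 1 + x j ^ 2
      nlinarith [sq_nonneg (x j)])
  simpa using h

/-- Pointwise bound for the squared Vandermonde. -/
lemma Vsq_le (x : Fin k → ℝ) :
    V k x ^ 2 ≤ 2 ^ n k * (∏ j, (1 + x j ^ 2)) ^ n k := by
  calc V k x ^ 2
      = ∏ p ∈ Finset.univ.filter (fun p : Fin k × Fin k => p.1 < p.2), (x p.2 - x p.1) ^ 2 := by
        unfold V; rw [← Finset.prod_pow]
    _ ≤ ∏ p ∈ Finset.univ.filter (fun p : Fin k × Fin k => p.1 < p.2),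
          (2 * ∏ j, (1 + x j ^ 2)) := by
        refine Finset.prod_le_prod (fun p _ => sq_nonneg _) fun p hp => ?_
        have hne : p.1 ≠ p.2 := by
          simp only [Finset.mem_filter] at hp
          exact ne_of_lt hp.2
        have hsd := Finset.prod_sdiff (Finset.subset_univ ({p.1, p.2} : Finset (Fin k)))
          (f := fun j => 1 + x j ^ 2)
        rw [Finset.prod_pair hne] at hsd
        have hB := one_le_prodQ (Finset.univ \ {p.1, p.2}) x
        have hP : (0 : ℝ) ≤ (1 + x p.1 ^ 2) * (1 + x p.2 ^ 2) := by positivity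
        have hpair : (1 + x p.1 ^ 2) * (1 + x p.2 ^ 2) ≤ ∏ j, (1 + x j ^ 2) := by
          nlinarith [hsd, hB, hP]
        nlinarith [sq_nonneg (x p.1 + x p.2), sq_nonneg (x p.1 * x p.2), hpair]
    _ = 2 ^ n k * (∏ j, (1 + x j ^ 2)) ^ n k := by
        rw [Finset.prod_const, mul_pow, n]

/-- The parametrized integrand. -/
noncomputable def F (k : ℕ) (t : ℝ) (x : Fin k → ℝ) : ℝ :=
  V k x ^ 2 * Real.exp (-(t ^ 2 * ∑ j, x j ^ 2) / 2)

lemma F_one (x : Fin k → ℝ) : F k 1 x = hermiteWeight x := by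
  unfold F V hermiteWeight
  congr 1
  congr 1
  rw [← Finset.sum_div]
  ring_nf

lemma contF (t : ℝ) : Continuous (F k t) :=
  (contV.pow 2).mul
    (Real.continuous_exp.comp (((continuous_const.mul contS).neg).div_const 2))

/-- Pointwise bound for `F` when `1/2 ≤ t²`. -/
lemma F_le {t : ℝ} (ht : 1 / 2 ≤ t ^ 2) (x : Fin k → ℝ) :
    F k t x ≤ 2 ^ n k * ∏ j, ((1 + x j ^ 2) ^ n k * Real.exp (-(1/4) * x j ^ 2)) := by
  have hS : 0 ≤ ∑ j, x j ^ 2 := Finset.sum_nonneg fun j _ => sq_nonneg _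
  have hexp : Real.exp (-(t ^ 2 * ∑ j, x j ^ 2) / 2)
      ≤ Real.exp (-(1/4) * ∑ j, x j ^ 2) := by
    apply Real.exp_le_exp.2
    nlinarith [mul_le_mul_of_nonneg_right ht hS]
  have hsplit : Real.exp (-(1/4) * ∑ j, x j ^ 2) = ∏ j, Real.exp (-(1/4) * x j ^ 2) := by
    rw [← Real.exp_sum]
    congr 1
    rw [Finset.mul_sum]
  calc F k t x ≤ V k x ^ 2 * Real.exp (-(1/4) * ∑ j, x j ^ 2) :=
        mul_le_mul_of_nonneg_left hexp (sq_nonneg _)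
    _ ≤ (2 ^ n k * (∏ j, (1 + x j ^ 2)) ^ n k) * Real.exp (-(1/4) * ∑ j, x j ^ 2) :=
        mul_le_mul_of_nonneg_right (Vsq_le x) (Real.exp_nonneg _)
    _ = 2 ^ n k * ∏ j, ((1 + x j ^ 2) ^ n k * Real.exp (-(1/4) * x j ^ 2)) := by
        rw [Finset.prod_mul_distrib, ← Finset.prod_pow, hsplit]; ring

lemma F_nonneg (t : ℝ) (x : Fin k → ℝ) : 0 ≤ F k t x :=
  mul_nonneg (sq_nonneg _) (Real.exp_nonneg _)

lemma intF {t : ℝ} (ht : 1 / 2 ≤ t ^ 2) : Integrable (F k t) := by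
  refine ((intProd (n k) (a := 1/4) (by norm_num)).const_mul
    ((2 : ℝ) ^ n k)).mono' (contF t).aestronglyMeasurable ?_
  filter_upwards with x
  rw [Real.norm_eq_abs, abs_of_nonneg (F_nonneg t x)]
  exact F_le ht x

/-- Derivative of `F` in `t`. -/
noncomputable def F' (k : ℕ) (t : ℝ) (x : Fin k → ℝ) : ℝ :=
  V k x ^ 2 * (Real.exp (-(t ^ 2 * ∑ j, x j ^ 2) / 2) * (-(t * ∑ j, x j ^ 2)))

lemma contF' (t : ℝ) : Continuous (F' k t) :=
  (contV.pow 2).mul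
    ((Real.continuous_exp.comp (((continuous_const.mul contS).neg).div_const 2)).mul
      ((continuous_const.mul contS).neg))

lemma hasDerivF (x : Fin k → ℝ) (t : ℝ) :
    HasDerivAt (fun s => F k s x) (F' k t x) t := by
  have h1 : HasDerivAt (fun s : ℝ => -(s ^ 2 * ∑ j, x j ^ 2) / 2)
      (-(t * ∑ j, x j ^ 2)) t := by
    have h := ((hasDerivAt_pow 2 t).mul_const (∑ j, x j ^ 2)).neg.div_const 2
    exact h.congr_deriv (by ring)
  have h2 := HasDerivAt.const_mul (V k x ^ 2) h1.exp
  exact h2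

lemma S_mul_exp_le (c S : ℝ) (hc : 0 < c) (hS : 0 ≤ S) :
    S * Real.exp (-c * S) ≤ c⁻¹ := by
  have h := Real.add_one_le_exp (c * S)
  have h2 : c * S ≤ Real.exp (c * S) := by linarith
  have h3 : c * S * Real.exp (-c * S) ≤ Real.exp (c * S) * Real.exp (-c * S) :=
    mul_le_mul_of_nonneg_right h2 (Real.exp_nonneg _)
  rw [← Real.exp_add] at h3
  have hz : c * S + -c * S = 0 := by ring
  rw [hz, Real.exp_zero] at h3
  calc S * Real.exp (-c * S) = c⁻¹ * (c * S * Real.exp (-c * S)) := by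
        field_simp
    _ ≤ c⁻¹ * 1 := mul_le_mul_of_nonneg_left h3 (by positivity)
    _ = c⁻¹ := mul_one _

/-- Bound for the derivative on the ball `|t - 1| < 1/2`. -/
lemma F'_le {t : ℝ} (ht : t ∈ Metric.ball (1 : ℝ) (1/2)) (x : Fin k → ℝ) :
    ‖F' k t x‖ ≤ 24 * (2 ^ n k * ∏ j, ((1 + x j ^ 2) ^ n k * Real.exp (-(1/16) * x j ^ 2))) := by
  have htb : |t - 1| < 1/2 := by simpa [Real.dist_eq] using ht
  rcases abs_lt.1 htb with ⟨hl, hr⟩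
  have ht1 : 1/2 < t := by linarith
  have ht2 : t < 3/2 := by linarith
  have htsq : 1/4 ≤ t ^ 2 := by nlinarith
  set S := ∑ j, x j ^ 2 with hSdef
  have hS : 0 ≤ S := Finset.sum_nonneg fun j _ => sq_nonneg _
  have hFeq : F' k t x = -(V k x ^ 2 * (Real.exp (-(t ^ 2 * S) / 2) * (t * S))) := by
    unfold F'
    rw [← hSdef]; ring
  have habs : ‖F' k t x‖ = V k x ^ 2 * (Real.exp (-(t ^ 2 * S) / 2) * (t * S)) := by
    rw [hFeq, Real.norm_eq_abs, abs_neg, abs_of_nonneg]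
    exact mul_nonneg (sq_nonneg _)
      (mul_nonneg (Real.exp_nonneg _) (mul_nonneg (by linarith) hS))
  rw [habs]
  have hexp : Real.exp (-(t ^ 2 * S) / 2)
      ≤ Real.exp (-(1/16) * S) * Real.exp (-(1/16) * S) := by
    rw [← Real.exp_add]
    apply Real.exp_le_exp.2
    nlinarith [mul_le_mul_of_nonneg_right htsq hS]
  have hSexp : S * Real.exp (-(1/16) * S) ≤ 16 := by
    have h := S_mul_exp_le (1/16) S (by norm_num) hS
    norm_num at h
    convert h using 2 <;> norm_num
  have step1 : Real.exp (-(t ^ 2 * S) / 2) * (t * S) ≤ 24 * Real.exp (-(1/16) * S) := by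
    calc Real.exp (-(t ^ 2 * S) / 2) * (t * S)
        ≤ (Real.exp (-(1/16) * S) * Real.exp (-(1/16) * S)) * (t * S) :=
          mul_le_mul_of_nonneg_right hexp (mul_nonneg (by linarith) hS)
      _ = t * (S * Real.exp (-(1/16) * S)) * Real.exp (-(1/16) * S) := by ring
      _ ≤ ((3/2) * 16) * Real.exp (-(1/16) * S) := by
          apply mul_le_mul_of_nonneg_right _ (Real.exp_nonneg _)
          have hb1 : t * (S * Real.exp (-(1/16) * S)) ≤ (3/2) * (S * Real.exp (-(1/16) * S)) :=
            mul_le_mul_of_nonneg_right ht2.le (mul_nonneg hS (Real.exp_nonneg _))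
          have hb2 : (3/2 : ℝ) * (S * Real.exp (-(1/16) * S)) ≤ (3/2) * 16 :=
            mul_le_mul_of_nonneg_left hSexp (by norm_num)
          linarith
      _ = 24 * Real.exp (-(1/16) * S) := by norm_num
  have hexpsplit : Real.exp (-(1/16) * S) = ∏ j, Real.exp (-(1/16) * x j ^ 2) := by
    rw [hSdef, ← Real.exp_sum]
    congr 1
    rw [Finset.mul_sum]
  calc V k x ^ 2 * (Real.exp (-(t ^ 2 * S) / 2) * (t * S))
      ≤ V k x ^ 2 * (24 * Real.exp (-(1/16) * S)) :=
        mul_le_mul_of_nonneg_left step1 (sq_nonneg _)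
    _ ≤ (2 ^ n k * (∏ j, (1 + x j ^ 2)) ^ n k) * (24 * Real.exp (-(1/16) * S)) :=
        mul_le_mul_of_nonneg_right (Vsq_le x)
          (mul_nonneg (by norm_num) (Real.exp_nonneg _))
    _ = 24 * (2 ^ n k * ∏ j, ((1 + x j ^ 2) ^ n k * Real.exp (-(1/16) * x j ^ 2))) := by
        rw [Finset.prod_mul_distrib, ← Finset.prod_pow, hexpsplit]; ring

lemma hermite_smul (t : ℝ) (x : Fin k → ℝ) :
    hermiteWeight (t • x) = t ^ (2 * n k) * F k t x := by
  show V k (t • x) ^ 2 * Real.exp (-∑ j, (t • x) j ^ 2 / 2) = _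
  rw [V_smul]
  have hsum : ∑ j, (t • x) j ^ 2 / 2 = (t ^ 2 * ∑ j, x j ^ 2) / 2 := by
    simp only [Pi.smul_apply, smul_eq_mul, mul_pow]
    rw [← Finset.sum_div, ← Finset.mul_sum]
  rw [hsum]
  unfold F
  rw [pow_mul, neg_div]
  ring

end HermiteAux

open HermiteAux

/-- `⟨∑_j x_j²⟩_H = k² ⟨1⟩_H`. -/
theorem hermite_sum_sq (k : ℕ) :
    ∫ x : Fin k → ℝ, (∑ j, x j ^ 2) * hermiteWeight x
      = (k : ℝ) ^ 2 * ∫ x : Fin k → ℝ, hermiteWeight x := by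
  set G : ℝ → ℝ := fun t => ∫ x : Fin k → ℝ, F k t x with hG
  have hG1 : G 1 = ∫ x : Fin k → ℝ, hermiteWeight x := by
    rw [hG]
    exact integral_congr_ae (Filter.Eventually.of_forall fun x => F_one x)
  -- Scaling identity
  have hscale : ∀ t : ℝ, 0 < t → G t = (t ^ k ^ 2)⁻¹ * G 1 := by
    intro t ht
    have ht0 : t ≠ 0 := ne_of_gt ht
    have hcomp := MeasureTheory.Measure.integral_comp_smul
      (volume : Measure (Fin k → ℝ)) hermiteWeight t
    rw [Module.finrank_fin_fun] at hcomp
    have hlhs : ∫ x : Fin k → ℝ, hermiteWeight (t • x)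
        = t ^ (2 * n k) * G t := by
      rw [hG]
      simp_rw [hermite_smul t]
      exact integral_const_mul _ _
    have habs : |((t : ℝ) ^ k)⁻¹| = (t ^ k)⁻¹ := by
      rw [abs_of_nonneg]
      positivity
    rw [hlhs, habs, smul_eq_mul, ← hG1] at hcomp
    -- hcomp : t ^ (2 * n k) * G t = (t ^ k)⁻¹ * G 1
    have hpow : (t ^ (2 * n k)) * (t ^ k) = t ^ k ^ 2 := by
      rw [← pow_add, two_n_add_k]
    have hne : (t : ℝ) ^ (2 * n k) ≠ 0 := pow_ne_zero _ ht0
    have hstep : G t = (t ^ (2 * n k))⁻¹ * ((t ^ k)⁻¹ * G 1) := by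
      rw [← hcomp, ← mul_assoc, inv_mul_cancel₀ hne, one_mul]
    rw [hstep, ← mul_assoc, ← mul_inv, hpow]
  -- Closed-form derivative at t = 1
  have hd_closed : HasDerivAt G (-((k : ℝ) ^ 2) * G 1) 1 := by
    have hform : G =ᶠ[nhds (1 : ℝ)] fun t => (t ^ k ^ 2)⁻¹ * G 1 := by
      filter_upwards [Ioi_mem_nhds (zero_lt_one)] with t ht
      exact hscale t ht
    have hd : HasDerivAt (fun t : ℝ => (t ^ k ^ 2)⁻¹ * G 1) (-((k : ℝ) ^ 2) * G 1) 1 := by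
      have h := ((hasDerivAt_pow (k ^ 2) (1 : ℝ)).inv (by simp)).mul_const (G 1)
      refine h.congr_deriv ?_
      all_goals push_cast
      all_goals norm_num
    exact hd.congr_of_eventuallyEq hform
  -- Derivative via differentiation under the integral sign
  have key := hasDerivAt_integral_of_dominated_loc_of_deriv_le
    (F := fun t x => F k t x) (F' := fun t x => F' k t x) (x₀ := (1 : ℝ))
    (bound := fun x : Fin k → ℝ =>
      24 * (2 ^ n k * ∏ j, ((1 + x j ^ 2) ^ n k * Real.exp (-(1/16) * x j ^ 2))))
    (μ := (volume : Measure (Fin k → ℝ))) (s := Metric.ball (1:ℝ) (1/2)) (Metric.ball_mem_nhds _ (by norm_num))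
    (Filter.Eventually.of_forall fun t => (contF t).aestronglyMeasurable)
    (intF (by norm_num))
    (contF' 1).aestronglyMeasurable
    (Filter.Eventually.of_forall fun x t ht => F'_le ht x)
    (((intProd (n k) (a := 1/16) (by norm_num)).const_mul ((2 : ℝ) ^ n k)).const_mul 24)
    (Filter.Eventually.of_forall fun x t _ => hasDerivF x t)
  obtain ⟨-, hd_int⟩ := key
  have huniq : (∫ x : Fin k → ℝ, F' k 1 x) = -((k : ℝ) ^ 2) * G 1 :=
    hd_int.unique hd_closed
  have hptw : ∀ x : Fin k → ℝ, F' k 1 x = -((∑ j, x j ^ 2) * hermiteWeight x) := by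
    intro x
    rw [← F_one]
    unfold HermiteAux.F' HermiteAux.F
    ring
  have hneg : (∫ x : Fin k → ℝ, F' k 1 x)
      = -∫ x : Fin k → ℝ, (∑ j, x j ^ 2) * hermiteWeight x := by
    simp_rw [hptw]
    exact integral_neg _
  rw [hneg, hG1] at huniq
  linarith
end

section
/- With the Hermite-weight Selberg functional ⟨f⟩ = ∫_{ℝ^k} f(x) (Π_{j<m}(x_m-x_j))^2 e^{-Σ x_j^2/2} dx, one has ⟨Σ_{j=1}^k x_j^4⟩ = k(2k^2+1) ⟨1⟩. -/
open Finset MeasureTheory MvPolynomial Filter Topology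

namespace HermiteAux

/-- 1D Gaussian moment. -/
noncomputable def G (n : ℕ) : ℝ := ∫ x : ℝ, x ^ n * Real.exp (-x ^ 2 / 2)

variable {k : ℕ}

lemma integrable_pow_gauss (n : ℕ) :
    Integrable (fun x : ℝ => x ^ n * Real.exp (-x ^ 2 / 2)) := by
  have h := integrable_rpow_mul_exp_neg_mul_sq (b := (1:ℝ)/2) (by norm_num)
      (s := (n : ℝ)) (lt_of_lt_of_le (by norm_num) (Nat.cast_nonneg n))
  have he : (fun x : ℝ => x ^ n * Real.exp (-x ^ 2 / 2))
      = fun x : ℝ => x ^ ((n : ℝ)) * Real.exp (-(1/2) * x ^ 2) := by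
    funext x
    rw [Real.rpow_natCast]
    congr 1
    ring
  rw [he]
  exact h

lemma tendsto_pow_gauss (n : ℕ) :
    Tendsto (fun x : ℝ => x ^ n * Real.exp (-x ^ 2 / 2)) (cocompact ℝ) (𝓝 0) := by
  have h := tendsto_rpow_abs_mul_exp_neg_mul_sq_cocompact (by norm_num : (0:ℝ) < 1/2) (n : ℝ)
  refine squeeze_zero_norm (fun x => ?_) h
  rw [Real.norm_eq_abs, abs_mul, abs_pow, abs_of_pos (Real.exp_pos _), Real.rpow_natCast]
  apply le_of_eq
  congr 1
  ring

lemma G_rec (n : ℕ) : G (n + 2) = (n + 1) * G n := by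
  have hd : ∀ x : ℝ, HasDerivAt (fun x : ℝ => x ^ (n+1) * Real.exp (-x ^ 2 / 2))
      (((n : ℝ)+1) * (x ^ n * Real.exp (-x^2/2)) - x ^ (n+2) * Real.exp (-x^2/2)) x := by
    intro x
    have h1 : HasDerivAt (fun x : ℝ => x ^ (n+1)) (((n : ℝ)+1) * x ^ n) x := by
      simpa using hasDerivAt_pow (n+1) x
    have h3 : HasDerivAt (fun x : ℝ => -x^2/2) (-x) x := by
      have := ((hasDerivAt_pow 2 x).neg).div_const 2
      simpa using this.congr_deriv (by ring)
    have h2 : HasDerivAt (fun x : ℝ => Real.exp (-x^2/2)) (Real.exp (-x^2/2) * (-x)) x :=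
      (Real.hasDerivAt_exp _).comp x h3
    have := h1.mul h2
    refine this.congr_deriv ?_
    push_cast
    ring
  have hi : Integrable (fun x : ℝ =>
      ((n : ℝ)+1) * (x ^ n * Real.exp (-x^2/2)) - x ^ (n+2) * Real.exp (-x^2/2)) :=
    ((integrable_pow_gauss n).const_mul _).sub (integrable_pow_gauss (n+2))
  have hbot : Tendsto (fun x : ℝ => x ^ (n+1) * Real.exp (-x ^ 2 / 2)) atBot (𝓝 0) :=
    (tendsto_pow_gauss (n+1)).mono_left _root_.atBot_le_cocompact
  have htop : Tendsto (fun x : ℝ => x ^ (n+1) * Real.exp (-x ^ 2 / 2)) atTop (𝓝 0) :=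
    (tendsto_pow_gauss (n+1)).mono_left _root_.atTop_le_cocompact
  have h0 := integral_of_hasDerivAt_of_tendsto hd hi hbot htop
  rw [sub_zero] at h0
  rw [integral_sub ((integrable_pow_gauss n).const_mul _) (integrable_pow_gauss (n+2)),
    MeasureTheory.integral_const_mul] at h0
  have : (0:ℝ) = ((n : ℝ)+1) * G n - G (n+2) := by
    rw [← h0]; rfl
  push_cast
  linarith

lemma G_one : G 1 = 0 := by
  have hd : ∀ x : ℝ, HasDerivAt (fun x : ℝ => -Real.exp (-x ^ 2 / 2))
      (x ^ 1 * Real.exp (-x^2/2)) x := by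
    intro x
    have h3 : HasDerivAt (fun x : ℝ => -x^2/2) (-x) x := by
      have := ((hasDerivAt_pow 2 x).neg).div_const 2
      simpa using this.congr_deriv (by ring)
    have h2 : HasDerivAt (fun x : ℝ => Real.exp (-x^2/2)) (Real.exp (-x^2/2) * (-x)) x :=
      (Real.hasDerivAt_exp _).comp x h3
    have := h2.neg
    refine this.congr_deriv ?_
    ring
  have h00 : Tendsto (fun x : ℝ => -Real.exp (-x ^ 2 / 2)) (cocompact ℝ) (𝓝 0) := by
    have := (tendsto_pow_gauss 0).neg
    simpa using this
  have h0 := integral_of_hasDerivAt_of_tendsto hd (integrable_pow_gauss 1)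
    (h00.mono_left _root_.atBot_le_cocompact) (h00.mono_left _root_.atTop_le_cocompact)
  rw [sub_zero] at h0
  exact h0

def Pr (k : ℕ) : Finset (Fin k × Fin k) :=
  Finset.univ.filter (fun p : Fin k × Fin k => p.1 < p.2)

/-- The Vandermonde polynomial. -/
noncomputable def Vd (k : ℕ) : MvPolynomial (Fin k) ℝ :=
  ∏ p ∈ Pr k, (X p.2 - X p.1)

lemma pderiv_finset_prod {ι : Type*} [DecidableEq ι] (i : Fin k) (s : Finset ι)
    (f : ι → MvPolynomial (Fin k) ℝ) :
    pderiv i (∏ a ∈ s, f a) = ∑ a ∈ s, pderiv i (f a) * ∏ b ∈ s.erase a, f b := by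
  classical
  induction s using Finset.induction_on with
  | empty => simp
  | @insert a s ha ih =>
    rw [Finset.prod_insert ha, pderiv_mul, ih, Finset.sum_insert ha, Finset.erase_insert ha,
      Finset.mul_sum]
    congr 1
    refine Finset.sum_congr rfl fun b hb => ?_
    have hba : b ≠ a := fun h => ha (h ▸ hb)
    rw [Finset.erase_insert_of_ne hba.symm, Finset.prod_insert (fun h => ha (Finset.mem_of_mem_erase h))]
    ring

lemma sum_mul_pderiv_Vd (F : Fin k → MvPolynomial (Fin k) ℝ)
    (H : Fin k × Fin k → MvPolynomial (Fin k) ℝ)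
    (hFH : ∀ p ∈ Pr k, F p.2 - F p.1 = (X p.2 - X p.1) * H p) :
    ∑ i, F i * pderiv i (Vd k) = (∑ p ∈ Pr k, H p) * Vd k := by
  classical
  calc ∑ i, F i * pderiv i (Vd k)
      = ∑ i, ∑ p ∈ Pr k, F i * ((pderiv i (X p.2 - X p.1)) * ∏ q ∈ (Pr k).erase p,
          (X q.2 - X q.1)) := by
        refine Finset.sum_congr rfl fun i _ => ?_
        rw [Vd, pderiv_finset_prod, Finset.mul_sum]
    _ = ∑ p ∈ Pr k, (∑ i, F i * pderiv i (X p.2 - X p.1)) * ∏ q ∈ (Pr k).erase p,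
          (X q.2 - X q.1) := by
        rw [Finset.sum_comm]
        refine Finset.sum_congr rfl fun p _ => ?_
        rw [Finset.sum_mul]
        exact Finset.sum_congr rfl fun i _ => (mul_assoc _ _ _).symm
    _ = ∑ p ∈ Pr k, H p * ((X p.2 - X p.1) * ∏ q ∈ (Pr k).erase p, (X q.2 - X q.1)) := by
        refine Finset.sum_congr rfl fun p hp => ?_
        have h1 : ∑ i, F i * pderiv i (X p.2 - X p.1) = F p.2 - F p.1 := by
          simp only [map_sub, pderiv_X, mul_sub, Finset.sum_sub_distrib]
          congr 1 <;>
          · simp [Pi.single_apply, mul_ite, Finset.sum_ite_eq', Finset.mem_univ]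
        rw [h1, hFH p hp]
        ring
    _ = (∑ p ∈ Pr k, H p) * Vd k := by
        rw [Finset.sum_mul]
        refine Finset.sum_congr rfl fun p hp => ?_
        have h2 := Finset.mul_prod_erase (Pr k)
          (fun q : Fin k × Fin k => (X q.2 - X q.1 : MvPolynomial (Fin k) ℝ)) hp
        rw [Vd, ← h2]

lemma sum_square {M : Type*} [AddCommMonoid M] (g : Fin k → Fin k → M) :
    ∑ p : Fin k × Fin k, g p.1 p.2
      = (∑ p ∈ Pr k, (g p.1 p.2 + g p.2 p.1)) + ∑ a, g a a := by
  classical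
  have h1 := Finset.sum_filter_add_sum_filter_not (Finset.univ : Finset (Fin k × Fin k))
    (fun p => p.1 < p.2) (fun p => g p.1 p.2)
  have h2 := Finset.sum_filter_add_sum_filter_not
    (Finset.univ.filter (fun p : Fin k × Fin k => ¬ p.1 < p.2))
    (fun p => p.2 < p.1) (fun p => g p.1 p.2)
  have hswap : ∑ p ∈ (Finset.univ.filter (fun p : Fin k × Fin k => ¬ p.1 < p.2)).filter
      (fun p => p.2 < p.1), g p.1 p.2 = ∑ p ∈ Pr k, g p.2 p.1 := by
    refine Finset.sum_nbij' (fun p => Prod.swap p) (fun p => Prod.swap p) ?_ ?_ ?_ ?_ ?_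
    · intro p hp
      simp only [Finset.mem_filter, Finset.mem_univ, true_and] at hp
      simp [Pr, hp.2]
    · intro p hp
      simp only [Pr, Finset.mem_filter, Finset.mem_univ, true_and] at hp
      simp [hp, le_of_lt hp, asymm hp]
    · intro p _; simp
    · intro p _; simp
    · intro p _; simp
  have hdiag : ∑ p ∈ (Finset.univ.filter (fun p : Fin k × Fin k => ¬ p.1 < p.2)).filter
      (fun p => ¬ p.2 < p.1), g p.1 p.2 = ∑ a, g a a := by
    refine Finset.sum_nbij' (fun p => p.1) (fun a => (a, a)) ?_ ?_ ?_ ?_ ?_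
    · intro p _; simp
    · intro a _; simp
    · intro p hp
      simp only [Finset.mem_filter, Finset.mem_univ, true_and, not_lt] at hp
      have : p.1 = p.2 := le_antisymm hp.2 hp.1
      show ((p.1, p.1) : Fin k × Fin k) = p
      exact Prod.ext rfl this
    · intro a _; rfl
    · intro p hp
      simp only [Finset.mem_filter, Finset.mem_univ, true_and, not_lt] at hp
      have : p.1 = p.2 := le_antisymm hp.2 hp.1
      show g p.1 p.2 = g p.1 p.1
      rw [← this]
  rw [← h1, ← h2, hswap, hdiag, Finset.sum_add_distrib]
  have : ∑ p ∈ Pr k, g p.1 p.2 = ∑ p ∈ Finset.univ.filter (fun p : Fin k × Fin k => p.1 < p.2),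
      g p.1 p.2 := rfl
  rw [this]
  abel

lemma card_Pr : 2 * (Pr k).card + k = k * k := by
  classical
  have := sum_square (k := k) (fun _ _ => (1 : ℕ))
  simpa [Finset.card_univ, two_mul, mul_comm] using this.symm

noncomputable def Lam (k : ℕ) : MvPolynomial (Fin k) ℝ →ₗ[ℝ] ℝ :=
  Finsupp.lsum ℝ (fun d : Fin k →₀ ℕ => LinearMap.id.smulRight (∏ j, G (d j)))
    ∘ₗ (AddMonoidAlgebra.coeffLinearEquiv ℝ).toLinearMap

lemma Lam_monomial (d : Fin k →₀ ℕ) (c : ℝ) :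
    Lam k (monomial d c) = c * ∏ j, G (d j) := by
  simp [Lam, AddMonoidAlgebra.coeffLinearEquiv, monomial, smul_eq_mul]

lemma Lam_ibp (i : Fin k) (p : MvPolynomial (Fin k) ℝ) :
    Lam k (pderiv i p) = Lam k (X i * p) := by
  induction p using MvPolynomial.induction_on' with
  | add p q hp hq => rw [map_add, map_add, mul_add, map_add, hp, hq]
  | monomial d c =>
    have hX : X i * monomial d c = monomial (d + Finsupp.single i 1) c := by
      rw [show (X i : MvPolynomial (Fin k) ℝ) = monomial (Finsupp.single i 1) 1 from rfl,
        monomial_mul, one_mul, add_comm]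
    rw [pderiv_monomial, hX, Lam_monomial, Lam_monomial]
    have e1 : ∏ j, G ((d - Finsupp.single i 1 : Fin k →₀ ℕ) j)
        = G (d i - 1) * ∏ j ∈ Finset.univ.erase i, G (d j) := by
      rw [← Finset.mul_prod_erase Finset.univ _ (Finset.mem_univ i)]
      congr 1
      · rw [Finsupp.tsub_apply, Finsupp.single_eq_same]
      · refine Finset.prod_congr rfl fun j hj => ?_
        have hji : j ≠ i := Finset.ne_of_mem_erase hj
        rw [Finsupp.tsub_apply, Finsupp.single_eq_of_ne hji, Nat.sub_zero]
    have e2 : ∏ j, G ((d + Finsupp.single i 1 : Fin k →₀ ℕ) j)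
        = G (d i + 1) * ∏ j ∈ Finset.univ.erase i, G (d j) := by
      rw [← Finset.mul_prod_erase Finset.univ _ (Finset.mem_univ i)]
      congr 1
      · rw [Finsupp.add_apply, Finsupp.single_eq_same]
      · refine Finset.prod_congr rfl fun j hj => ?_
        have hji : j ≠ i := Finset.ne_of_mem_erase hj
        rw [Finsupp.add_apply, Finsupp.single_eq_of_ne hji, Nat.add_zero]
    rw [e1, e2]
    cases hdi : d i with
    | zero => simp [G_one]
    | succ n =>
      rw [Nat.add_sub_cancel, show n + 1 + 1 = n + 2 from rfl, G_rec]
      push_cast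
      ring

lemma integrable_eval (p : MvPolynomial (Fin k) ℝ) :
    Integrable (fun x : Fin k → ℝ => eval x p * ∏ j, Real.exp (-(x j) ^ 2 / 2)) := by
  have he : (fun x : Fin k → ℝ => eval x p * ∏ j, Real.exp (-(x j) ^ 2 / 2))
      = fun x => ∑ d ∈ p.support, coeff d p *
          ∏ j, ((x j) ^ (d j) * Real.exp (-(x j) ^ 2 / 2)) := by
    funext x
    rw [eval_eq', Finset.sum_mul]
    refine Finset.sum_congr rfl fun d _ => ?_
    rw [mul_assoc, ← Finset.prod_mul_distrib]
  rw [he]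
  exact integrable_finset_sum _ fun d _ =>
    (Integrable.fintype_prod (f := fun j (t : ℝ) => t ^ (d j) * Real.exp (-t ^ 2 / 2))
      (fun j => integrable_pow_gauss (d j))).const_mul _

lemma Eint_monomial (d : Fin k →₀ ℕ) (c : ℝ) :
    ∫ x : Fin k → ℝ, eval x (monomial d c) * ∏ j, Real.exp (-(x j) ^ 2 / 2)
      = Lam k (monomial d c) := by
  have he : (fun x : Fin k → ℝ => eval x (monomial d c) * ∏ j, Real.exp (-(x j) ^ 2 / 2))
      = fun x => c * ∏ j, ((x j) ^ (d j) * Real.exp (-(x j) ^ 2 / 2)) := by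
    funext x
    rw [eval_monomial, Finsupp.prod_pow, mul_assoc, ← Finset.prod_mul_distrib]
  rw [he, MeasureTheory.integral_const_mul,
    MeasureTheory.integral_fintype_prod_volume_eq_prod (ι := Fin k)
      (f := fun j (t : ℝ) => t ^ (d j) * Real.exp (-t ^ 2 / 2)),
    Lam_monomial]
  rfl

lemma Eint_eq (p : MvPolynomial (Fin k) ℝ) :
    ∫ x : Fin k → ℝ, eval x p * ∏ j, Real.exp (-(x j) ^ 2 / 2) = Lam k p := by
  induction p using MvPolynomial.induction_on' with
  | monomial d c => exact Eint_monomial d c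
  | add p q hp hq =>
    have he : (fun x : Fin k → ℝ => eval x (p + q) * ∏ j, Real.exp (-(x j) ^ 2 / 2))
        = fun x => eval x p * ∏ j, Real.exp (-(x j) ^ 2 / 2)
            + eval x q * ∏ j, Real.exp (-(x j) ^ 2 / 2) := by
      funext x
      rw [map_add, add_mul]
    rw [he, integral_add (integrable_eval p) (integrable_eval q), hp, hq, map_add]

lemma Lam_two_mul (p : MvPolynomial (Fin k) ℝ) :
    Lam k (2 * p) = 2 * Lam k p := by
  have h : (2 : MvPolynomial (Fin k) ℝ) * p = p + p := by ring
  rw [h, map_add]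
  ring

lemma Lam_natCast_mul (n : ℕ) (p : MvPolynomial (Fin k) ℝ) :
    Lam k ((n : MvPolynomial (Fin k) ℝ) * p) = n * Lam k p := by
  rw [← nsmul_eq_mul, map_nsmul, nsmul_eq_mul]

lemma pderiv_Vd_sq (i : Fin k) :
    pderiv i (Vd k ^ 2) = 2 * Vd k * pderiv i (Vd k) := by
  rw [pderiv_pow]
  push_cast
  ring

lemma sum_X_mul_pderiv_Vd :
    ∑ i, X i * pderiv i (Vd k) = (((Pr k).card : ℕ) : MvPolynomial (Fin k) ℝ) * Vd k := by
  have h := sum_mul_pderiv_Vd (k := k) (fun i => X i) (fun _ => 1) (fun p _ => (mul_one _).symm)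
  rw [h, Finset.sum_const, nsmul_eq_mul, mul_one]

lemma sum_pderiv_Vd :
    ∑ i, pderiv i (Vd k) = 0 := by
  have h := sum_mul_pderiv_Vd (k := k) (fun _ => (1 : MvPolynomial (Fin k) ℝ)) (fun _ => 0)
    (fun p _ => by ring)
  simp only [one_mul] at h
  rw [h]
  simp

lemma sum_X3_mul_pderiv_Vd :
    ∑ i, X i ^ 3 * pderiv i (Vd k)
      = (∑ p ∈ Pr k, (X p.2 ^ 2 + X p.2 * X p.1 + X p.1 ^ 2)) * Vd k :=
  sum_mul_pderiv_Vd (k := k) (fun i => X i ^ 3)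
    (fun p => X p.2 ^ 2 + X p.2 * X p.1 + X p.1 ^ 2) (fun p _ => by ring)

lemma pderiv_sum_X (i : Fin k) :
    pderiv i (∑ j, (X j : MvPolynomial (Fin k) ℝ)) = 1 := by
  rw [map_sum]
  simp [pderiv_X, Pi.single_apply]

set_option maxHeartbeats 2000000 in
/-- The main algebraic computation. -/
theorem Lam_main :
    Lam k ((∑ j, X j ^ 4) * Vd k ^ 2)
      = (k : ℝ) * (2 * (k : ℝ) ^ 2 + 1) * Lam k (Vd k ^ 2) := by
  classical
  -- weighted derivative sums for W = Vd k ^ 2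
  have hXW : ∑ i, X i * pderiv i (Vd k ^ 2)
      = ((2 * (Pr k).card : ℕ) : MvPolynomial (Fin k) ℝ) * Vd k ^ 2 := by
    calc ∑ i, X i * pderiv i (Vd k ^ 2) = 2 * Vd k * ∑ i, X i * pderiv i (Vd k) := by
          rw [Finset.mul_sum]
          exact Finset.sum_congr rfl fun i _ => by rw [pderiv_Vd_sq]; ring
      _ = 2 * Vd k * ((((Pr k).card : ℕ) : MvPolynomial (Fin k) ℝ) * Vd k) := by
          rw [sum_X_mul_pderiv_Vd]
      _ = ((2 * (Pr k).card : ℕ) : MvPolynomial (Fin k) ℝ) * Vd k ^ 2 := by push_cast; ring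
  have hdW : ∑ i, pderiv i (Vd k ^ 2) = 0 := by
    calc ∑ i, pderiv i (Vd k ^ 2) = 2 * Vd k * ∑ i, pderiv i (Vd k) := by
          rw [Finset.mul_sum]
          exact Finset.sum_congr rfl fun i _ => by rw [pderiv_Vd_sq]
      _ = 0 := by rw [sum_pderiv_Vd, mul_zero]
  have hX3W : ∑ i, X i ^ 3 * pderiv i (Vd k ^ 2)
      = ((2 : ℕ) : MvPolynomial (Fin k) ℝ)
          * (((∑ p ∈ Pr k, (X p.2 ^ 2 + X p.1 ^ 2)) + ∑ p ∈ Pr k, X p.2 * X p.1)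
              * Vd k ^ 2) := by
    calc ∑ i, X i ^ 3 * pderiv i (Vd k ^ 2) = 2 * Vd k * ∑ i, X i ^ 3 * pderiv i (Vd k) := by
          rw [Finset.mul_sum]
          exact Finset.sum_congr rfl fun i _ => by rw [pderiv_Vd_sq]; ring
      _ = 2 * Vd k * ((∑ p ∈ Pr k, (X p.2 ^ 2 + X p.2 * X p.1 + X p.1 ^ 2)) * Vd k) := by
          rw [sum_X3_mul_pderiv_Vd]
      _ = ((2 : ℕ) : MvPolynomial (Fin k) ℝ)
          * (((∑ p ∈ Pr k, (X p.2 ^ 2 + X p.1 ^ 2)) + ∑ p ∈ Pr k, X p.2 * X p.1)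
              * Vd k ^ 2) := by
          have hsplit : (∑ p ∈ Pr k, (X p.2 ^ 2 + X p.2 * X p.1 + X p.1 ^ 2)
              : MvPolynomial (Fin k) ℝ)
              = (∑ p ∈ Pr k, (X p.2 ^ 2 + X p.1 ^ 2)) + ∑ p ∈ Pr k, X p.2 * X p.1 := by
            rw [← Finset.sum_add_distrib]
            exact Finset.sum_congr rfl fun p _ => by ring
          rw [hsplit]
          push_cast
          ring
  -- IBP consequences
  have E1 : Lam k ((∑ j, X j ^ 2) * Vd k ^ 2)
      = k * Lam k (Vd k ^ 2) + (2 * (Pr k).card : ℕ) * Lam k (Vd k ^ 2) := by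
    have hstep : ∀ i : Fin k, Lam k (X i ^ 2 * Vd k ^ 2)
        = Lam k (Vd k ^ 2) + Lam k (X i * pderiv i (Vd k ^ 2)) := by
      intro i
      have h := Lam_ibp i (X i * Vd k ^ 2)
      have e2 : pderiv i (X i * Vd k ^ 2)
          = Vd k ^ 2 + X i * pderiv i (Vd k ^ 2) := by
        rw [pderiv_mul, pderiv_X_self, one_mul]
      have e1 : X i * (X i * Vd k ^ 2) = X i ^ 2 * Vd k ^ 2 := by ring
      rw [e2, e1, map_add] at h
      exact h.symm
    have hsum : Lam k ((∑ j, X j ^ 2) * Vd k ^ 2) = ∑ i, Lam k (X i ^ 2 * Vd k ^ 2) := by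
      rw [← map_sum, Finset.sum_mul]
    rw [hsum]
    calc ∑ i, Lam k (X i ^ 2 * Vd k ^ 2)
        = ∑ i : Fin k, (Lam k (Vd k ^ 2) + Lam k (X i * pderiv i (Vd k ^ 2))) :=
          Finset.sum_congr rfl fun i _ => hstep i
      _ = k * Lam k (Vd k ^ 2) + Lam k (∑ i, X i * pderiv i (Vd k ^ 2)) := by
          rw [Finset.sum_add_distrib, Finset.sum_const, ← map_sum]
          simp [nsmul_eq_mul]
      _ = k * Lam k (Vd k ^ 2) + (2 * (Pr k).card : ℕ) * Lam k (Vd k ^ 2) := by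
          rw [hXW, Lam_natCast_mul]
  have E2 : Lam k ((∑ j, X j) ^ 2 * Vd k ^ 2) = k * Lam k (Vd k ^ 2) := by
    have hstep : ∀ i : Fin k, Lam k (X i * ((∑ j, X j) * Vd k ^ 2))
        = Lam k (Vd k ^ 2) + Lam k ((∑ j, X j) * pderiv i (Vd k ^ 2)) := by
      intro i
      have h := Lam_ibp i ((∑ j, X j) * Vd k ^ 2)
      have e2 : pderiv i ((∑ j, X j) * Vd k ^ 2)
          = Vd k ^ 2 + (∑ j, X j) * pderiv i (Vd k ^ 2) := by
        rw [pderiv_mul, pderiv_sum_X, one_mul]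
      rw [e2, map_add] at h
      exact h.symm
    have hsum : Lam k ((∑ j, X j) ^ 2 * Vd k ^ 2)
        = ∑ i, Lam k (X i * ((∑ j, X j) * Vd k ^ 2)) := by
      rw [← map_sum]
      congr 1
      rw [← Finset.sum_mul]
      ring
    rw [hsum]
    calc ∑ i, Lam k (X i * ((∑ j, X j) * Vd k ^ 2))
        = ∑ i : Fin k, (Lam k (Vd k ^ 2) + Lam k ((∑ j, X j) * pderiv i (Vd k ^ 2))) :=
          Finset.sum_congr rfl fun i _ => hstep i
      _ = k * Lam k (Vd k ^ 2) + Lam k ((∑ j, X j) * ∑ i, pderiv i (Vd k ^ 2)) := by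
          rw [Finset.sum_add_distrib, Finset.sum_const, ← map_sum, ← Finset.mul_sum]
          simp [nsmul_eq_mul]
      _ = k * Lam k (Vd k ^ 2) := by rw [hdW, mul_zero, map_zero, add_zero]
  have E3 : Lam k ((∑ j, X j ^ 4) * Vd k ^ 2)
      = 3 * Lam k ((∑ j, X j ^ 2) * Vd k ^ 2)
        + 2 * (Lam k ((∑ p ∈ Pr k, (X p.2 ^ 2 + X p.1 ^ 2)) * Vd k ^ 2)
            + Lam k ((∑ p ∈ Pr k, X p.2 * X p.1) * Vd k ^ 2)) := by
    have hstep : ∀ i : Fin k, Lam k (X i ^ 4 * Vd k ^ 2)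
        = 3 * Lam k (X i ^ 2 * Vd k ^ 2) + Lam k (X i ^ 3 * pderiv i (Vd k ^ 2)) := by
      intro i
      have h := Lam_ibp i (X i ^ 3 * Vd k ^ 2)
      have e2 : pderiv i (X i ^ 3 * Vd k ^ 2)
          = ((3 : ℕ) : MvPolynomial (Fin k) ℝ) * (X i ^ 2 * Vd k ^ 2)
            + X i ^ 3 * pderiv i (Vd k ^ 2) := by
        rw [pderiv_mul, pderiv_pow, pderiv_X_self]
        push_cast
        ring
      have e1 : X i * (X i ^ 3 * Vd k ^ 2) = X i ^ 4 * Vd k ^ 2 := by ring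
      rw [e2, e1, map_add, Lam_natCast_mul] at h
      rw [← h]
      norm_num
    have hsum : Lam k ((∑ j, X j ^ 4) * Vd k ^ 2) = ∑ i, Lam k (X i ^ 4 * Vd k ^ 2) := by
      rw [← map_sum, Finset.sum_mul]
    rw [hsum]
    calc ∑ i, Lam k (X i ^ 4 * Vd k ^ 2)
        = ∑ i : Fin k, (3 * Lam k (X i ^ 2 * Vd k ^ 2)
            + Lam k (X i ^ 3 * pderiv i (Vd k ^ 2))) :=
          Finset.sum_congr rfl fun i _ => hstep i
      _ = 3 * Lam k ((∑ j, X j ^ 2) * Vd k ^ 2) + Lam k (∑ i, X i ^ 3 * pderiv i (Vd k ^ 2)) := by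
          rw [Finset.sum_add_distrib, ← Finset.mul_sum, ← map_sum, ← map_sum, ← Finset.sum_mul]
      _ = 3 * Lam k ((∑ j, X j ^ 2) * Vd k ^ 2)
          + 2 * (Lam k ((∑ p ∈ Pr k, (X p.2 ^ 2 + X p.1 ^ 2)) * Vd k ^ 2)
              + Lam k ((∑ p ∈ Pr k, X p.2 * X p.1) * Vd k ^ 2)) := by
          rw [hX3W, Lam_natCast_mul, add_mul, map_add]
          norm_num
  -- counting identities
  have E4 : Lam k ((∑ p ∈ Pr k, (X p.2 ^ 2 + X p.1 ^ 2)) * Vd k ^ 2)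
        + Lam k ((∑ j, X j ^ 2) * Vd k ^ 2)
      = k * Lam k ((∑ j, X j ^ 2) * Vd k ^ 2) := by
    have h := sum_square (k := k) (fun a b => (X b ^ 2 : MvPolynomial (Fin k) ℝ))
    have hl : ∑ p : Fin k × Fin k, (X p.2 ^ 2 : MvPolynomial (Fin k) ℝ)
        = (k : ℕ) • ∑ j, (X j ^ 2 : MvPolynomial (Fin k) ℝ) := by
      rw [Fintype.sum_prod_type]
      simp
    rw [hl] at h
    have h2 : (∑ p ∈ Pr k, ((X p.2 ^ 2 : MvPolynomial (Fin k) ℝ) + X p.1 ^ 2)) * Vd k ^ 2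
          + (∑ j, X j ^ 2) * Vd k ^ 2
        = (k : ℕ) • ((∑ j, (X j ^ 2 : MvPolynomial (Fin k) ℝ)) * Vd k ^ 2) := by
      rw [← add_mul, ← h, smul_mul_assoc]
    have h3 := congrArg (Lam k) h2
    rw [map_add, map_nsmul, nsmul_eq_mul] at h3
    exact h3
  have E5 : 2 * Lam k ((∑ p ∈ Pr k, X p.2 * X p.1) * Vd k ^ 2)
        + Lam k ((∑ j, X j ^ 2) * Vd k ^ 2)
      = Lam k ((∑ j, X j) ^ 2 * Vd k ^ 2) := by
    have h := sum_square (k := k) (fun a b => (X a * X b : MvPolynomial (Fin k) ℝ))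
    have hl : ∑ p : Fin k × Fin k, (X p.1 * X p.2 : MvPolynomial (Fin k) ℝ)
        = (∑ j, X j) * (∑ j, X j) := by
      rw [Fintype.sum_prod_type, Finset.sum_mul_sum]
    rw [hl] at h
    have h3 : ((∑ j, X j : MvPolynomial (Fin k) ℝ)) ^ 2
        = 2 * (∑ p ∈ Pr k, X p.2 * X p.1)
          + ∑ j, X j ^ 2 := by
      rw [pow_two, h]
      have ha : ∑ p ∈ Pr k, ((X p.1 * X p.2 : MvPolynomial (Fin k) ℝ) + X p.2 * X p.1)
          = 2 * ∑ p ∈ Pr k, (X p.2 * X p.1 : MvPolynomial (Fin k) ℝ) := by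
        rw [Finset.mul_sum]
        exact Finset.sum_congr rfl fun p _ => by ring
      have hb : ∑ a, (X a * X a : MvPolynomial (Fin k) ℝ)
          = ∑ j, (X j ^ 2 : MvPolynomial (Fin k) ℝ) :=
        Finset.sum_congr rfl fun a _ => (sq (X a)).symm
      rw [ha, hb]
    have hq : ((∑ j, X j : MvPolynomial (Fin k) ℝ)) ^ 2 * Vd k ^ 2
        = 2 * ((∑ p ∈ Pr k, X p.2 * X p.1) * Vd k ^ 2)
          + (∑ j, X j ^ 2) * Vd k ^ 2 := by
      rw [h3]
      ring
    have h4 := congrArg (Lam k) hq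
    rw [map_add, Lam_two_mul] at h4
    exact h4.symm
  -- final arithmetic
  have hNk : 2 * (((Pr k).card : ℝ)) + k = (k : ℝ) * k := by
    exact_mod_cast congrArg (Nat.cast : ℕ → ℝ) (card_Pr (k := k))
  push_cast at E1
  linear_combination E3 + 2 * E4 + E5 + E2 + 2 * (k : ℝ) * E1
    + 2 * (k : ℝ) * Lam k (Vd k ^ 2) * hNk

lemma hermiteWeight_eq (x : Fin k → ℝ) :
    hermiteWeight x = eval x (Vd k ^ 2) * ∏ j, Real.exp (-(x j) ^ 2 / 2) := by
  have hb : (∏ p ∈ Finset.univ.filter (fun p : Fin k × Fin k => p.1 < p.2), (x p.2 - x p.1))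
      = eval x (Vd k) := by
    rw [Vd, map_prod]
    exact Finset.prod_congr rfl fun p _ =>
      (by rw [map_sub, eval_X, eval_X] :
        eval x (X p.2 - X p.1) = x p.2 - x p.1).symm
  rw [hermiteWeight, hb, ← map_pow]
  congr 1
  rw [← Real.exp_sum]
  congr 1
  simp [neg_div, Finset.sum_neg_distrib]

end HermiteAux

open HermiteAux in
/-- `⟨∑_j x_j⁴⟩_H = k(2k²+1) ⟨1⟩_H`. -/
theorem hermite_sum_fourth (k : ℕ) :
    ∫ x : Fin k → ℝ, (∑ j, x j ^ 4) * hermiteWeight x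
      = (k : ℝ) * (2 * (k : ℝ) ^ 2 + 1) * ∫ x : Fin k → ℝ, hermiteWeight x := by
  have h1 : (fun x : Fin k → ℝ => (∑ j, x j ^ 4) * hermiteWeight x)
      = fun x : Fin k → ℝ =>
          eval x ((∑ j, X j ^ 4) * Vd k ^ 2) * ∏ j, Real.exp (-(x j) ^ 2 / 2) := by
    funext x
    rw [hermiteWeight_eq, map_mul]
    rw [show eval x (∑ j, (X j : MvPolynomial (Fin k) ℝ) ^ 4) = ∑ j, x j ^ 4 by simp]
    ring
  have h2 : (fun x : Fin k → ℝ => hermiteWeight x)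
      = fun x : Fin k → ℝ => eval x (Vd k ^ 2) * ∏ j, Real.exp (-(x j) ^ 2 / 2) :=
    funext fun x => hermiteWeight_eq x
  rw [h1, h2, Eint_eq, Eint_eq, Lam_main]
end

section
/- With the Hermite-weight Selberg functional ⟨f⟩ = ∫_{ℝ^k} f(x) (Π_{j<m}(x_m-x_j))^2 e^{-Σ x_j^2/2} dx, one has ⟨(Σ_{j=1}^k x_j^2)^2⟩ = k^2(k^2+2) ⟨1⟩. -/
open Finset MeasureTheory

namespace HermAux

open Real Set

variable {k : ℕ}

noncomputable def V {k : ℕ} (x : Fin k → ℝ) : ℝ :=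
  (∏ p ∈ Finset.univ.filter (fun p : Fin k × Fin k => p.1 < p.2), (x p.2 - x p.1)) ^ 2
noncomputable def S {k : ℕ} (x : Fin k → ℝ) : ℝ := ∑ j, x j ^ 2
noncomputable def P (k : ℕ) : ℕ :=
  (Finset.univ.filter (fun p : Fin k × Fin k => p.1 < p.2)).card
noncomputable def Q {k : ℕ} (x : Fin k → ℝ) : ℝ := ∏ j, (1 + 2 * (x j) ^ 2)

lemma contV : Continuous (V (k := k)) := by
  unfold V; fun_prop

lemma contS : Continuous (S (k := k)) := by
  unfold S; fun_prop

lemma V_nonneg (x : Fin k → ℝ) : 0 ≤ V x := sq_nonneg _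

lemma S_nonneg (x : Fin k → ℝ) : 0 ≤ S x :=
  Finset.sum_nonneg fun _ _ => sq_nonneg _

lemma S_smul (c : ℝ) (x : Fin k → ℝ) : S (c • x) = c ^ 2 * S x := by
  simp [S, Finset.mul_sum, mul_pow, mul_comm]

lemma V_smul (c : ℝ) (x : Fin k → ℝ) : V (c • x) = c ^ (2 * P k) * V x := by
  simp only [V, Pi.smul_apply, smul_eq_mul, ← mul_sub, Finset.prod_mul_distrib,
    Finset.prod_const, P, mul_pow, ← pow_mul]
  ring

lemma card_P : 2 * P k + k = k * k := by
  classical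
  have h1 : P k + (Finset.univ.filter (fun p : Fin k × Fin k => ¬ p.1 < p.2)).card
      = k * k := by
    rw [P, Finset.card_filter_add_card_filter_not]
    simp [Finset.card_univ]
  have h2 : (Finset.univ.filter (fun p : Fin k × Fin k => ¬ p.1 < p.2)).card
      = P k + k := by
    have e1 : (Finset.univ.filter (fun p : Fin k × Fin k => ¬ p.1 < p.2))
        = (Finset.univ.filter (fun p : Fin k × Fin k => p.2 < p.1)) ∪
          (Finset.univ.filter (fun p : Fin k × Fin k => p.1 = p.2)) := by
      ext p
      simp only [Finset.mem_filter, Finset.mem_univ, true_and, Finset.mem_union, not_lt]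
      constructor
      · intro h
        rcases lt_or_eq_of_le h with h | h
        · exact Or.inl h
        · exact Or.inr h.symm
      · rintro (h | h)
        · exact h.le
        · exact h.ge
    have e2 : (Finset.univ.filter (fun p : Fin k × Fin k => p.2 < p.1)).card = P k := by
      rw [P]
      apply Finset.card_nbij (fun p => (p.2, p.1))
      · intro p hp; simp_all
      · intro p hp q hq h
        simp only [Prod.mk.injEq] at h
        exact Prod.ext h.2 h.1
      · intro p hp
        simp only [Finset.coe_filter, Finset.mem_univ, true_and, Set.mem_setOf_eq] at hp ⊢
        exact ⟨(p.2, p.1), by simpa using hp, rfl⟩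
    have e3 : (Finset.univ.filter (fun p : Fin k × Fin k => p.1 = p.2)).card = k := by
      rw [show (Finset.univ.filter (fun p : Fin k × Fin k => p.1 = p.2))
          = Finset.univ.diag by ext p; simp [Finset.mem_diag, Prod.ext_iff, eq_comm]]
      simp [Finset.diag_card]
    rw [e1, Finset.card_union_of_disjoint, e2, e3]
    · rw [Finset.disjoint_filter]
      intro p _ h h'
      exact absurd h' (ne_of_gt h)
  omega


lemma one_le_factor (x : Fin k → ℝ) (i : Fin k) : (1:ℝ) ≤ 1 + 2 * (x i) ^ 2 := by
  nlinarith [sq_nonneg (x i)]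

lemma one_le_prod_aux (s : Finset (Fin k)) (x : Fin k → ℝ) :
    (1:ℝ) ≤ ∏ j ∈ s, (1 + 2 * (x j) ^ 2) := by
  calc (1:ℝ) = ∏ _j ∈ s, (1:ℝ) := by simp
  _ ≤ ∏ j ∈ s, (1 + 2 * (x j) ^ 2) :=
      Finset.prod_le_prod (fun i _ => zero_le_one) (fun i _ => one_le_factor x i)

lemma one_le_Q (x : Fin k → ℝ) : 1 ≤ Q x := one_le_prod_aux _ x

lemma Q_nonneg (x : Fin k → ℝ) : 0 ≤ Q x := le_trans zero_le_one (one_le_Q x)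

lemma sum_le_prod (s : Finset (Fin k)) (x : Fin k → ℝ) :
    ∑ j ∈ s, x j ^ 2 ≤ ∏ j ∈ s, (1 + 2 * (x j) ^ 2) := by
  classical
  induction s using Finset.induction_on with
  | empty => simp
  | @insert a s ha ih =>
      rw [Finset.sum_insert ha, Finset.prod_insert ha]
      have h1 := one_le_prod_aux s x
      nlinarith [sq_nonneg (x a), Finset.sum_nonneg (fun j (_ : j ∈ s) => sq_nonneg (x j))]

lemma S_le_Q (x : Fin k → ℝ) : (∑ j, x j ^ 2) ≤ Q x := sum_le_prod _ x

lemma pair_le_Q (x : Fin k → ℝ) {a b : Fin k} (hab : a < b) :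
    (x b - x a) ^ 2 ≤ Q x := by
  classical
  have h1 : (x b - x a) ^ 2 ≤ (1 + 2 * (x a) ^ 2) * (1 + 2 * (x b) ^ 2) := by
    nlinarith [sq_nonneg (x a), sq_nonneg (x b), sq_nonneg (x a + x b), sq_nonneg (x a * x b)]
  refine h1.trans ?_
  have h2 : (1 + 2 * (x a) ^ 2) * (1 + 2 * (x b) ^ 2)
      = ∏ j ∈ ({a, b} : Finset (Fin k)), (1 + 2 * (x j) ^ 2) := by
    rw [Finset.prod_pair (ne_of_lt hab)]
  have h3 := Finset.prod_sdiff (Finset.subset_univ ({a, b} : Finset (Fin k)))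
    (f := fun j => (1 + 2 * (x j) ^ 2))
  rw [h2, Q, ← h3]
  have h4 := one_le_prod_aux (Finset.univ \ ({a, b} : Finset (Fin k))) x
  nlinarith [one_le_prod_aux ({a, b} : Finset (Fin k)) x]


lemma V_le_Q_pow (x : Fin k → ℝ) : V x ≤ Q x ^ P k := by
  rw [V, ← Finset.prod_pow]
  calc ∏ p ∈ Finset.univ.filter (fun p : Fin k × Fin k => p.1 < p.2), (x p.2 - x p.1) ^ 2
      ≤ ∏ _p ∈ Finset.univ.filter (fun p : Fin k × Fin k => p.1 < p.2), Q x := by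
        refine Finset.prod_le_prod (fun p _ => sq_nonneg _) (fun p hp => ?_)
        exact pair_le_Q x (Finset.mem_filter.mp hp).2
    _ = Q x ^ P k := by rw [Finset.prod_const, P]

lemma oneDimInt (M : ℕ) :
    Integrable (fun s : ℝ => (1 + 2 * s ^ 2) ^ M * Real.exp (-(1/2 : ℝ) * s ^ 2)) := by
  have h : (fun s : ℝ => (1 + 2 * s ^ 2) ^ M * Real.exp (-(1/2:ℝ) * s ^ 2))
      = fun s => ∑ i ∈ Finset.range (M+1),
          ((M.choose i : ℝ) * 2 ^ i) * (s ^ (2*i) * Real.exp (-(1/2:ℝ) * s ^ 2)) := by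
    funext s
    rw [add_comm (1:ℝ) (2 * s^2), add_pow, Finset.sum_mul]
    refine Finset.sum_congr rfl fun i _ => ?_
    rw [mul_pow, ← pow_mul, one_pow]
    ring
  rw [h]
  refine integrable_finset_sum _ fun i _ => Integrable.const_mul ?_ _
  have h2 := integrable_rpow_mul_exp_neg_mul_sq (by norm_num : (0:ℝ) < 1/2)
    (s := ((2*i : ℕ) : ℝ)) (lt_of_lt_of_le (by norm_num) (Nat.cast_nonneg _))
  simp only [Real.rpow_natCast] at h2
  exact h2

lemma exp_S (x : Fin k → ℝ) :
    Real.exp (-(1/2:ℝ) * S x) = ∏ j, Real.exp (-(1/2:ℝ) * (x j) ^ 2) := by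
  have h : -(1/2:ℝ) * S x = ∑ j, (-(1/2:ℝ) * (x j) ^ 2) := by
    rw [S, Finset.mul_sum]
  rw [h, Real.exp_sum]

lemma domInt (M : ℕ) :
    Integrable (fun x : Fin k → ℝ => Q x ^ M * Real.exp (-(1/2:ℝ) * S x)) := by
  have h : (fun x : Fin k → ℝ => Q x ^ M * Real.exp (-(1/2:ℝ) * S x))
      = fun x => ∏ j, ((1 + 2 * (x j) ^ 2) ^ M * Real.exp (-(1/2:ℝ) * (x j) ^ 2)) := by
    funext x
    rw [Finset.prod_mul_distrib, exp_S, Q, ← Finset.prod_pow]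
  rw [h]
  exact Integrable.fintype_prod fun _ => oneDimInt M


lemma scaling {t : ℝ} (ht : 0 < t) :
    ∫ x : Fin k → ℝ, V x * S x ^ 2 * Real.exp (-(t * S x) / 2)
      = (Real.sqrt t ^ k)⁻¹ * ((t ^ (P k + 2) : ℝ))⁻¹
        * ∫ x : Fin k → ℝ, V x * S x ^ 2 * Real.exp (-(S x) / 2) := by
  set f : (Fin k → ℝ) → ℝ := fun x => V x * S x ^ 2 * Real.exp (-(S x) / 2) with hf
  have hst : Real.sqrt t ^ 2 = t := Real.sq_sqrt ht.le
  have hcomp := MeasureTheory.Measure.integral_comp_smul_of_nonneg (μ := volume)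
    f (Real.sqrt t) (hR := Real.sqrt_nonneg t)
  have hfin : Module.finrank ℝ (Fin k → ℝ) = k := by
    simp [Module.finrank_fintype_fun_eq_card]
  rw [hfin] at hcomp
  have hpt : ∀ x : Fin k → ℝ, f (Real.sqrt t • x)
      = t ^ (P k + 2) * (V x * S x ^ 2 * Real.exp (-(t * S x) / 2)) := by
    intro x
    simp only [hf, V_smul, S_smul, hst]
    rw [pow_mul, hst]
    ring
  simp only [hpt] at hcomp
  rw [integral_const_mul] at hcomp
  have htp : (t : ℝ) ^ (P k + 2) ≠ 0 := pow_ne_zero _ ht.ne'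
  rw [smul_eq_mul] at hcomp
  have hs : Real.sqrt t ^ k ≠ 0 := pow_ne_zero _ (Real.sqrt_pos.mpr ht).ne'
  generalize (∫ x : Fin k → ℝ, V x * S x ^ 2 * Real.exp (-(t * S x) / 2)) = I at hcomp ⊢
  field_simp at hcomp ⊢
  linear_combination hcomp

lemma exp_repr {v : ℝ} (hv : 0 < v) :
    ∫ t in Ioi (1:ℝ), (t - 1) * Real.exp (-(t * v)) = Real.exp (-v) / v ^ 2 := by
  have h1 : ∫ t in Ioi (1:ℝ), (t - 1) * Real.exp (-(t * v))
      = ∫ t in Ioi (0:ℝ), (t + 1 - 1) * Real.exp (-((t + 1) * v)) := by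
    rw [← integral_indicator measurableSet_Ioi, ← integral_indicator measurableSet_Ioi]
    rw [← integral_add_right_eq_self
      (fun x => (Ioi (1:ℝ)).indicator (fun t => (t - 1) * Real.exp (-(t * v))) x) 1]
    congr 1
    funext x
    by_cases hx : x ∈ Ioi (0:ℝ)
    · rw [Set.indicator_of_mem hx, Set.indicator_of_mem (by simpa using hx)]
    · rw [Set.indicator_of_notMem hx, Set.indicator_of_notMem]
      simp only [Set.mem_Ioi, not_lt] at hx ⊢
      linarith
  rw [h1]
  have h2 : ∀ t : ℝ, (t + 1 - 1) * Real.exp (-((t + 1) * v))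
      = Real.exp (-v) * (t ^ ((2:ℝ) - 1) * Real.exp (-(v * t))) := by
    intro t
    rw [show ((2:ℝ) - 1) = 1 by norm_num, Real.rpow_one]
    rw [show -((t+1)*v) = -(v*t) + -v by ring, Real.exp_add]
    ring
  simp only [h2]
  rw [integral_const_mul, integral_rpow_mul_exp_neg_mul_Ioi (by norm_num) hv]
  rw [Real.Gamma_two]
  rw [show ((1:ℝ)/v) ^ (2:ℝ) = (1/v) ^ (2:ℕ) by rw [← Real.rpow_natCast (1/v) 2]; norm_num]
  field_simp


noncomputable def beta (k : ℕ) : ℝ := (k:ℝ)/2 + (P k) + 2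

lemma beta_eq {k : ℕ} : beta k - 2 = (k:ℝ)^2 / 2 := by
  have h : ((2 * P k + k : ℕ) : ℝ) = ((k * k : ℕ) : ℝ) := by rw [card_P]
  push_cast at h
  rw [beta]
  nlinarith [h]

lemma ptw {t : ℝ} (ht : 1 < t) :
    (t - 1) * ((Real.sqrt t ^ k)⁻¹ * ((t ^ (P k + 2) : ℝ))⁻¹)
      = t ^ (1 - beta k) - t ^ (-beta k) := by
  have ht0 : 0 < t := lt_trans one_pos ht
  have h1 : Real.sqrt t ^ k = t ^ ((k:ℝ)/2) := by
    rw [Real.sqrt_eq_rpow, ← Real.rpow_natCast (t ^ ((1:ℝ)/2)) k, ← Real.rpow_mul ht0.le]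
    congr 1
    ring
  have h2 : (t ^ (P k + 2) : ℝ) = t ^ (((P k : ℝ)) + 2) := by
    rw [← Real.rpow_natCast t (P k + 2)]
    push_cast
    ring_nf
  have h3 : (Real.sqrt t ^ k)⁻¹ * ((t ^ (P k + 2) : ℝ))⁻¹ = t ^ (-beta k) := by
    rw [h1, h2, ← Real.rpow_neg ht0.le, ← Real.rpow_neg ht0.le, ← Real.rpow_add ht0, beta]
    ring_nf
  rw [h3, sub_mul, one_mul, sub_eq_add_neg (1:ℝ), Real.rpow_add ht0, Real.rpow_one]

lemma tIntegrable (hk : 0 < k) :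
    IntegrableOn (fun t : ℝ => (t - 1) * ((Real.sqrt t ^ k)⁻¹ * ((t ^ (P k + 2) : ℝ))⁻¹))
      (Ioi (1:ℝ)) := by
  have hb2 : 2 < beta k := by
    have := beta_eq (k := k)
    have hk2 : (0:ℝ) < (k:ℝ)^2 / 2 := by positivity
    linarith
  have hi1 : IntegrableOn (fun t : ℝ => t ^ (1 - beta k)) (Ioi (1:ℝ)) :=
    integrableOn_Ioi_rpow_of_lt (by linarith) one_pos
  have hi2 : IntegrableOn (fun t : ℝ => t ^ (-beta k)) (Ioi (1:ℝ)) :=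
    integrableOn_Ioi_rpow_of_lt (by linarith) one_pos
  have hsub : IntegrableOn (fun t : ℝ => t ^ (1 - beta k) - t ^ (-beta k)) (Ioi (1:ℝ)) :=
    hi1.sub hi2
  exact hsub.congr_fun (fun t ht => (ptw ht).symm) measurableSet_Ioi

lemma tInt (hk : 0 < k) :
    ∫ t in Ioi (1:ℝ), (t - 1) * ((Real.sqrt t ^ k)⁻¹ * ((t ^ (P k + 2) : ℝ))⁻¹)
      = 4 / ((k:ℝ)^2 * ((k:ℝ)^2 + 2)) := by
  have hb2 : 2 < beta k := by
    have := beta_eq (k := k)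
    have hk2 : (0:ℝ) < (k:ℝ)^2 / 2 := by positivity
    linarith
  have hi1 : IntegrableOn (fun t : ℝ => t ^ (1 - beta k)) (Ioi (1:ℝ)) :=
    integrableOn_Ioi_rpow_of_lt (by linarith) one_pos
  have hi2 : IntegrableOn (fun t : ℝ => t ^ (-beta k)) (Ioi (1:ℝ)) :=
    integrableOn_Ioi_rpow_of_lt (by linarith) one_pos
  have hcongr : ∫ t in Ioi (1:ℝ), (t - 1) * ((Real.sqrt t ^ k)⁻¹ * ((t ^ (P k + 2) : ℝ))⁻¹)
      = ∫ t in Ioi (1:ℝ), (t ^ (1 - beta k) - t ^ (-beta k)) :=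
    setIntegral_congr_fun measurableSet_Ioi (fun t ht => ptw ht)
  rw [hcongr, integral_sub hi1 hi2,
    integral_Ioi_rpow_of_lt (by linarith : 1 - beta k < -1) one_pos,
    integral_Ioi_rpow_of_lt (by linarith : -beta k < -1) one_pos]
  rw [Real.one_rpow, Real.one_rpow]
  have h2 : beta k - 2 = (k:ℝ)^2/2 := beta_eq
  have hkpos : (0:ℝ) < (k:ℝ)^2 := by positivity
  have e1 : 1 - beta k + 1 ≠ 0 := by linarith
  have e2 : -beta k + 1 ≠ 0 := by linarith
  field_simp
  ring_nf
  nlinarith [h2, hkpos]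


lemma hW_eq (x : Fin k → ℝ) : hermiteWeight x = V x * Real.exp (-(S x) / 2) := by
  rw [hermiteWeight, V, S, neg_div, ← Finset.sum_div]

/-- integrability of the main integrand, with Gaussian parameter t ≥ 1 -/
lemma intVS {t : ℝ} (ht : 1 ≤ t) :
    Integrable (fun x : Fin k → ℝ => V x * S x ^ 2 * Real.exp (-(t * S x) / 2)) := by
  refine (domInt (P k + 2)).mono' ?_ (ae_of_all _ fun x => ?_)
  · exact ((contV.mul (contS.pow 2)).mul
      (Real.continuous_exp.comp ((continuous_const.mul contS).neg.div_const 2))).aestronglyMeasurable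
  · have h0 : 0 ≤ V x * S x ^ 2 * Real.exp (-(t * S x) / 2) := by
      have := V_nonneg x; have := S_nonneg x; positivity
    rw [Real.norm_eq_abs, abs_of_nonneg h0]
    have hexp : Real.exp (-(t * S x) / 2) ≤ Real.exp (-(1/2:ℝ) * S x) := by
      apply Real.exp_le_exp.mpr
      nlinarith [S_nonneg x]
    have hS2 : S x ^ 2 ≤ Q x ^ 2 := by
      apply pow_le_pow_left₀ (S_nonneg x) (S_le_Q x)
    have hVS : V x * S x ^ 2 ≤ Q x ^ (P k) * Q x ^ 2 :=
      mul_le_mul (V_le_Q_pow x) hS2 (sq_nonneg _) (pow_nonneg (Q_nonneg x) _)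
    have hQ2 : (0:ℝ) ≤ Q x ^ (P k) * Q x ^ 2 :=
      mul_nonneg (pow_nonneg (Q_nonneg x) _) (pow_nonneg (Q_nonneg x) _)
    calc V x * S x ^ 2 * Real.exp (-(t * S x) / 2)
        ≤ (Q x ^ (P k) * Q x ^ 2) * Real.exp (-(1/2:ℝ) * S x) :=
          mul_le_mul hVS hexp (Real.exp_pos _).le hQ2
      _ = Q x ^ (P k + 2) * Real.exp (-(1/2:ℝ) * S x) := by rw [pow_add]

noncomputable def F {k : ℕ} (q : ℝ × (Fin k → ℝ)) : ℝ :=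
  (q.1 - 1) * (V q.2 * S q.2 ^ 2 * Real.exp (-(q.1 * S q.2) / 2))

lemma contF : Continuous (F (k := k)) := by
  apply Continuous.mul (continuous_fst.sub continuous_const)
  exact ((contV.comp continuous_snd).mul ((contS.comp continuous_snd).pow 2)).mul
    (Real.continuous_exp.comp
      (((continuous_fst.mul (contS.comp continuous_snd)).neg).div_const 2))

lemma F_nonneg {t : ℝ} (ht : 1 ≤ t) (x : Fin k → ℝ) : 0 ≤ F (t, x) := by
  have h1 := V_nonneg x; have h2 := S_nonneg x
  have h3 : (0:ℝ) ≤ t - 1 := by linarith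
  have h4 := (Real.exp_pos (-(t * S x) / 2)).le
  rw [F]
  have h5 : 0 ≤ V x * S x ^ 2 * Real.exp (-(t * S x) / 2) := by positivity
  exact mul_nonneg h3 h5

lemma intF (hk : 0 < k) :
    Integrable (F (k := k)) ((volume.restrict (Ioi (1:ℝ))).prod volume) := by
  rw [integrable_prod_iff contF.aestronglyMeasurable]
  constructor
  · filter_upwards [ae_restrict_mem measurableSet_Ioi] with t ht
    simpa [F] using (intVS ht.le).const_mul (t - 1)
  · have base : Integrable
        (fun t : ℝ => ((t - 1) * ((Real.sqrt t ^ k)⁻¹ * ((t ^ (P k + 2) : ℝ))⁻¹))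
          * ∫ x : Fin k → ℝ, V x * S x ^ 2 * Real.exp (-(S x) / 2))
        (volume.restrict (Ioi (1:ℝ))) := (tIntegrable hk).mul_const _
    refine base.congr ?_
    filter_upwards [ae_restrict_mem measurableSet_Ioi] with t ht
    have ht0 : (0:ℝ) < t := lt_trans one_pos ht
    have : ∫ x : Fin k → ℝ, ‖F (t, x)‖ = ∫ x : Fin k → ℝ, F (t, x) := by
      congr 1; funext x
      rw [Real.norm_eq_abs, abs_of_nonneg (F_nonneg ht.le x)]
    rw [this]
    show _ = ∫ x : Fin k → ℝ, F (t, x)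
    rw [show (fun x : Fin k → ℝ => F (t, x))
        = fun x => (t - 1) * (V x * S x ^ 2 * Real.exp (-(t * S x) / 2)) from rfl]
    rw [integral_const_mul, scaling ht0]
    ring

lemma pointwise_repr {x : Fin k → ℝ} (hx : 0 < S x) :
    ∫ t in Ioi (1:ℝ), F (t, x) = 4 * (V x * Real.exp (-(S x) / 2)) := by
  have hv : 0 < S x / 2 := by linarith
  have h1 : ∀ t : ℝ, F (t, x)
      = (V x * S x ^ 2) * ((t - 1) * Real.exp (-(t * (S x / 2)))) := by
    intro t
    rw [F]
    have : -(t * S x) / 2 = -(t * (S x / 2)) := by ring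
    rw [this]; ring
  simp only [h1]
  rw [integral_const_mul, exp_repr hv]
  have hx' : S x ≠ 0 := hx.ne'
  have : Real.exp (-(S x / 2)) = Real.exp (-(S x) / 2) := by rw [neg_div]
  rw [this]
  field_simp
  ring

theorem main (k : ℕ) :
    ∫ x : Fin k → ℝ, ((∑ j, x j ^ 2) ^ 2) * hermiteWeight x
      = (k : ℝ) ^ 2 * ((k : ℝ) ^ 2 + 2) * ∫ x : Fin k → ℝ, hermiteWeight x := by
  rcases Nat.eq_zero_or_pos k with hk | hk
  · subst hk
    simp
  -- rewrite LHS
  have hLHS : ∫ x : Fin k → ℝ, ((∑ j, x j ^ 2) ^ 2) * hermiteWeight x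
      = ∫ x : Fin k → ℝ, V x * S x ^ 2 * Real.exp (-(S x) / 2) := by
    congr 1; funext x
    rw [hW_eq, S]; ring
  set A := ∫ x : Fin k → ℝ, V x * S x ^ 2 * Real.exp (-(S x) / 2) with hA
  set Z := ∫ x : Fin k → ℝ, hermiteWeight x with hZ
  -- a.e. positivity of S
  haveI : Nonempty (Fin k) := ⟨⟨0, hk⟩⟩
  have h_ae : ∀ᵐ x : Fin k → ℝ, 0 < S x := by
    have hsub : {x : Fin k → ℝ | ¬ 0 < S x} ⊆ {0} := by
      intro x hx
      simp only [Set.mem_setOf_eq, not_lt] at hx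
      have hx0 : S x = 0 := le_antisymm hx (S_nonneg x)
      have : ∀ j, x j = 0 := by
        intro j
        have := (Finset.sum_eq_zero_iff_of_nonneg
          (fun i _ => sq_nonneg (x i))).mp hx0 j (Finset.mem_univ j)
        exact pow_eq_zero_iff (two_ne_zero) |>.mp this
      exact Set.mem_singleton_iff.mpr (funext this)
    rw [ae_iff]
    exact measure_mono_null hsub (measure_singleton 0)
  -- key identity
  have key : 4 * Z = A * (4 / ((k:ℝ)^2 * ((k:ℝ)^2 + 2))) := by
    have step1 : 4 * Z = ∫ x : Fin k → ℝ, ∫ t in Ioi (1:ℝ), F (t, x) := by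
      rw [hZ, ← integral_const_mul]
      apply integral_congr_ae
      filter_upwards [h_ae] with x hx
      rw [hW_eq, pointwise_repr hx]
    have step2 : ∫ x : Fin k → ℝ, ∫ t in Ioi (1:ℝ), F (t, x)
        = ∫ t in Ioi (1:ℝ), ∫ x : Fin k → ℝ, F (t, x) := by
      exact (integral_integral_swap (f := fun t x => F (t, x)) (intF hk)).symm
    have step3 : ∫ t in Ioi (1:ℝ), ∫ x : Fin k → ℝ, F (t, x)
        = ∫ t in Ioi (1:ℝ), ((t - 1) * ((Real.sqrt t ^ k)⁻¹ * ((t ^ (P k + 2) : ℝ))⁻¹)) * A := by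
      apply setIntegral_congr_fun measurableSet_Ioi
      intro t ht
      have ht0 : (0:ℝ) < t := lt_trans one_pos ht
      show (∫ x : Fin k → ℝ, (t - 1) * (V x * S x ^ 2 * Real.exp (-(t * S x) / 2))) = _
      rw [integral_const_mul, scaling ht0, ← hA]
      ring
    rw [step1, step2, step3, integral_mul_const, tInt hk]
    ring
  have hkne : (k:ℝ)^2 * ((k:ℝ)^2 + 2) ≠ 0 := by
    have : (0:ℝ) < (k:ℝ) := by exact_mod_cast hk
    positivity
  rw [hLHS]
  have key2 : 4 * Z * ((k:ℝ)^2 * ((k:ℝ)^2 + 2)) = A * 4 := by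
    rw [key]; field_simp
  linear_combination (-1/4 : ℝ) * key2


end HermAux

/-- `⟨(∑_j x_j²)²⟩_H = k²(k²+2) ⟨1⟩_H`. -/
theorem hermite_sum_sq_pow_two (k : ℕ) :
    ∫ x : Fin k → ℝ, ((∑ j, x j ^ 2) ^ 2) * hermiteWeight x
      = (k : ℝ) ^ 2 * ((k : ℝ) ^ 2 + 2) * ∫ x : Fin k → ℝ, hermiteWeight x := by
  exact HermAux.main k
end

section
/- Let α > 0 and Φ_{L;α}(x) = (Π_j x_j^{α-1}) (Π_{j<m}(x_m - x_j))^2 e^{-Σ_j x_j} on [0,∞)^k, with ⟨f⟩_{L;α} = ∫_{[0,∞)^k} f Φ_{L;α} dx. Then ⟨Σ_{j=1}^k x_j⟩_{L;α} = k(k-1+α) ⟨1⟩_{L;α}. -/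
open Finset MeasureTheory
open scoped Pointwise

/-- The Laguerre weight
`Φ_{L;α}(x) = (∏_j x_j^{α-1}) (∏_{j<m}(x_m - x_j))² e^{-∑_j x_j}`. -/
noncomputable def laguerreWeight {k : ℕ} (α : ℝ) (x : Fin k → ℝ) : ℝ :=
  (∏ j, x j ^ (α - 1)) *
    (∏ p ∈ Finset.univ.filter (fun p : Fin k × Fin k => p.1 < p.2), (x p.2 - x p.1)) ^ 2 *
    Real.exp (-∑ j, x j)

namespace Laguerre

/-! ### Combinatorial preliminaries -/

def Npairs (k : ℕ) : ℕ := (Finset.univ.filter (fun p : Fin k × Fin k => p.1 < p.2)).card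

lemma two_npairs (k : ℕ) : 2 * Npairs k + k = k * k := by
  classical
  have hswap : (Finset.univ.filter (fun p : Fin k × Fin k => p.1 < p.2)).card
      = (Finset.univ.filter (fun p : Fin k × Fin k => p.2 < p.1)).card := by
    apply Finset.card_bij' (fun p _ => Prod.swap p) (fun p _ => Prod.swap p)
    · intro a ha; simp only [Finset.mem_filter, Finset.mem_univ, true_and] at ha ⊢; exact ha
    · intro a ha; simp only [Finset.mem_filter, Finset.mem_univ, true_and] at ha ⊢; exact ha
    · intro a _; simp
    · intro a _; simp
  have hunion : (Finset.univ.filter (fun p : Fin k × Fin k => p.1 < p.2))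
      ∪ (Finset.univ.filter (fun p : Fin k × Fin k => p.2 < p.1))
      = (Finset.univ.filter (fun p : Fin k × Fin k => p.1 ≠ p.2)) := by
    ext p
    simp only [Finset.mem_union, Finset.mem_filter, Finset.mem_univ, true_and]
    constructor
    · rintro (h | h); exacts [ne_of_lt h, (ne_of_lt h).symm]
    · intro h; exact lt_or_gt_of_ne h
  have hdisj : Disjoint (Finset.univ.filter (fun p : Fin k × Fin k => p.1 < p.2))
      (Finset.univ.filter (fun p : Fin k × Fin k => p.2 < p.1)) := by
    rw [Finset.disjoint_left]
    intro p hp hq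
    simp only [Finset.mem_filter] at hp hq
    exact absurd hq.2 (not_lt_of_gt hp.2)
  have hcard := Finset.card_union_of_disjoint hdisj
  rw [hunion] at hcard
  have hoff : (Finset.univ.filter (fun p : Fin k × Fin k => p.1 ≠ p.2)).card = k * k - k := by
    have : (Finset.univ.filter (fun p : Fin k × Fin k => p.1 ≠ p.2))
        = (Finset.univ : Finset (Fin k)).offDiag := by
      ext p; simp [Finset.mem_offDiag]
    rw [this, Finset.offDiag_card]
    simp
  rw [hoff] at hcard
  have hk : k ≤ k * k := by
    cases k with
    | zero => simp
    | succ n => exact Nat.le_mul_of_pos_left _ (Nat.succ_pos n)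
  have hN : Npairs k = (Finset.univ.filter (fun p : Fin k × Fin k => p.2 < p.1)).card := hswap
  have hN' : Npairs k = (Finset.univ.filter (fun p : Fin k × Fin k => p.1 < p.2)).card := rfl
  omega

lemma one_add_sum_le_prod {ι : Type*} (s : Finset ι) (f : ι → ℝ)
    (hf : ∀ i ∈ s, 0 ≤ f i) : 1 + ∑ i ∈ s, f i ≤ ∏ i ∈ s, (1 + f i) := by
  classical
  induction s using Finset.cons_induction with
  | empty => simp
  | cons a s ha ih =>
    rw [Finset.sum_cons, Finset.prod_cons]
    have h1 : ∀ i ∈ s, 0 ≤ f i := fun i hi => hf i (Finset.mem_cons_of_mem hi)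
    have h3 := ih h1
    have h4 := hf a (Finset.mem_cons_self a s)
    have h5 : 0 ≤ ∑ i ∈ s, f i := Finset.sum_nonneg h1
    nlinarith

/-! ### The orthant, the functions, measurability -/

def Dset (k : ℕ) : Set (Fin k → ℝ) := Set.univ.pi fun _ : Fin k => Set.Ici (0:ℝ)

lemma measurableSet_Dset (k : ℕ) : MeasurableSet (Dset k) :=
  MeasurableSet.univ_pi fun _ => measurableSet_Ici

noncomputable def Gf (k : ℕ) (α : ℝ) (x : Fin k → ℝ) : ℝ :=
  (∏ j, x j ^ (α - 1)) *
    (∏ p ∈ Finset.univ.filter (fun p : Fin k × Fin k => p.1 < p.2), (x p.2 - x p.1)) ^ 2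

noncomputable def Ff (k : ℕ) (α : ℝ) (c : ℝ) (x : Fin k → ℝ) : ℝ :=
  Gf k α x * Real.exp (-(c * ∑ j, x j))

lemma measurable_Gf (k : ℕ) (α : ℝ) : Measurable (Gf k α) := by
  apply Measurable.mul
  · exact Finset.measurable_prod _ fun j _ => (measurable_pi_apply j).pow_const _
  · exact ((continuous_finset_prod _ fun p _ =>
      ((continuous_apply p.2).sub (continuous_apply p.1))).pow 2).measurable

lemma measurable_Ff (k : ℕ) (α c : ℝ) : Measurable (Ff k α c) := by
  apply (measurable_Gf k α).mul
  exact (((measurable_const.mul (Finset.measurable_sum _ fun j _ =>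
    measurable_pi_apply j)).neg).exp)

/-! ### Integrability -/

lemma int1d {s : ℝ} (hs : -1 < s) :
    IntegrableOn (fun t : ℝ => t ^ s * Real.exp (-(2⁻¹ * t))) (Set.Ioi 0) := by
  have h := integrableOn_rpow_mul_exp_neg_mul_rpow hs (zero_lt_one : (0:ℝ) < 1)
    (by norm_num : (0:ℝ) < 2⁻¹)
  refine h.congr_fun (fun t _ => ?_) measurableSet_Ioi
  simp only [Real.rpow_one, neg_mul]

lemma gInt (α : ℝ) (hα : 0 < α) (M : ℕ) :
    IntegrableOn (fun t : ℝ => t ^ (α - 1) * (1 + t) ^ M * Real.exp (-(2⁻¹ * t)))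
      (Set.Ici 0) := by
  rw [integrableOn_Ici_iff_integrableOn_Ioi]
  have hsum : IntegrableOn
      (fun t : ℝ => ∑ i ∈ Finset.range (M + 1),
        (M.choose i : ℝ) * (t ^ (α - 1 + i) * Real.exp (-(2⁻¹ * t)))) (Set.Ioi 0) := by
    apply MeasureTheory.integrable_finset_sum
    intro i _
    exact (int1d (by
      have : (0:ℝ) ≤ i := Nat.cast_nonneg i
      linarith : (-1:ℝ) < α - 1 + i)).const_mul _
  refine hsum.congr_fun (fun t ht => ?_) measurableSet_Ioi
  have ht0 : (0:ℝ) < t := ht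
  have hpow : (1 + t) ^ M = ∑ i ∈ Finset.range (M + 1), t ^ i * (M.choose i : ℝ) := by
    rw [add_comm (1:ℝ) t, add_pow]
    exact Finset.sum_congr rfl fun i _ => by rw [one_pow, mul_one]
  rw [hpow, Finset.mul_sum, Finset.sum_mul]
  refine Finset.sum_congr rfl fun i _ => ?_
  have : t ^ (α - 1 + i) = t ^ (α - 1) * t ^ i := by
    rw [Real.rpow_add ht0, Real.rpow_natCast]
  rw [this]; ring

lemma prodInt (k : ℕ) (g : ℝ → ℝ) (hg : IntegrableOn g (Set.Ici 0)) :
    IntegrableOn (fun x : Fin k → ℝ => ∏ j, g (x j)) (Dset k) := by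
  have h1 : Integrable ((Set.Ici (0:ℝ)).indicator g) :=
    (integrable_indicator_iff measurableSet_Ici).2 hg
  have h2 : Integrable (fun x : Fin k → ℝ => ∏ j, (Set.Ici (0:ℝ)).indicator g (x j)) :=
    Integrable.fintype_prod (f := fun _ : Fin k => (Set.Ici (0:ℝ)).indicator g) fun _ => h1
  have h3 : (fun x : Fin k → ℝ => ∏ j, (Set.Ici (0:ℝ)).indicator g (x j))
      = (Dset k).indicator (fun x : Fin k → ℝ => ∏ j, g (x j)) := by
    funext x
    by_cases hx : x ∈ Dset k
    · rw [Set.indicator_of_mem hx]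
      exact Finset.prod_congr rfl fun j _ =>
        Set.indicator_of_mem (hx j (Set.mem_univ j)) g
    · rw [Set.indicator_of_notMem hx]
      have hx' : ¬ ∀ j : Fin k, x j ∈ Set.Ici (0:ℝ) := by
        intro h; exact hx fun j _ => h j
      push_neg at hx'
      obtain ⟨j, hj⟩ := hx'
      exact Finset.prod_eq_zero (Finset.mem_univ j) (Set.indicator_of_notMem hj g)
  rw [h3] at h2
  exact (integrable_indicator_iff (measurableSet_Dset k)).1 h2

noncomputable def bnd (k : ℕ) (α : ℝ) (x : Fin k → ℝ) : ℝ :=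
  ∏ j, (x j ^ (α - 1) * (1 + x j) ^ (2 * Npairs k + 1) * Real.exp (-(2⁻¹ * x j)))

lemma bnd_int (k : ℕ) (α : ℝ) (hα : 0 < α) : IntegrableOn (bnd k α) (Dset k) := by
  unfold bnd
  exact prodInt k
    (fun t : ℝ => t ^ (α - 1) * (1 + t) ^ (2 * Npairs k + 1) * Real.exp (-(2⁻¹ * t)))
    (gInt α hα _)

lemma bnd_eq (k : ℕ) (α : ℝ) (x : Fin k → ℝ) :
    bnd k α x = (∏ j, x j ^ (α - 1)) * (∏ j, (1 + x j)) ^ (2 * Npairs k + 1) *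
      Real.exp (-(2⁻¹ * ∑ j, x j)) := by
  unfold bnd
  rw [Finset.prod_mul_distrib, Finset.prod_mul_distrib, Finset.prod_pow]
  congr 1
  rw [← Real.exp_sum]
  congr 1
  simp [Finset.mul_sum]

/-- the key pointwise bound -/
lemma key_bound (k : ℕ) (α : ℝ) {c : ℝ} (hc : (2:ℝ)⁻¹ ≤ c) {x : Fin k → ℝ}
    (hx : x ∈ Dset k) : (1 + ∑ j, x j) * |Ff k α c x| ≤ bnd k α x := by
  have hx' : ∀ j, 0 ≤ x j := fun j => hx j (Set.mem_univ j)
  set S := ∑ j, x j with hSdef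
  set P := ∏ j, (1 + x j) with hPdef
  set v := ∏ p ∈ Finset.univ.filter (fun p : Fin k × Fin k => p.1 < p.2), (x p.2 - x p.1)
    with hvdef
  set A := ∏ j, x j ^ (α - 1) with hAdef
  have hS0 : 0 ≤ S := Finset.sum_nonneg fun j _ => hx' j
  have h1SP : 1 + S ≤ P := one_add_sum_le_prod _ _ fun j _ => hx' j
  have hP1 : (1:ℝ) ≤ P := le_trans (by linarith) h1SP
  have hA0 : 0 ≤ A := Finset.prod_nonneg fun j _ => Real.rpow_nonneg (hx' j) _
  have hv : |v| ≤ P ^ Npairs k := by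
    rw [hvdef, Finset.abs_prod]
    calc ∏ p ∈ Finset.univ.filter (fun p : Fin k × Fin k => p.1 < p.2), |x p.2 - x p.1|
        ≤ ∏ _p ∈ Finset.univ.filter (fun p : Fin k × Fin k => p.1 < p.2), P := by
          apply Finset.prod_le_prod (fun p _ => abs_nonneg _)
          intro p hp
          simp only [Finset.mem_filter, Finset.mem_univ, true_and] at hp
          have hne : p.2 ≠ p.1 := (ne_of_lt hp).symm
          have hpair : x p.2 + x p.1 ≤ S := by
            have hps := Finset.sum_pair (f := x) hne
            rw [hSdef, ← hps]
            exact Finset.sum_le_sum_of_subset_of_nonneg (Finset.subset_univ _)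
              (fun j _ _ => hx' j)
          have habs : |x p.2 - x p.1| ≤ x p.2 + x p.1 :=
            abs_le.mpr ⟨by linarith [hx' p.1, hx' p.2], by linarith [hx' p.1, hx' p.2]⟩
          linarith
      _ = P ^ Npairs k := by rw [Finset.prod_const]; rfl
  have hvsq : v ^ 2 ≤ P ^ (2 * Npairs k) := by
    calc v ^ 2 = |v| ^ 2 := (sq_abs v).symm
    _ ≤ (P ^ Npairs k) ^ 2 := pow_le_pow_left₀ (abs_nonneg v) hv 2
    _ = P ^ (2 * Npairs k) := by rw [← pow_mul, mul_comm]
  have hexp : Real.exp (-(c * S)) ≤ Real.exp (-(2⁻¹ * S)) := by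
    apply Real.exp_le_exp.2
    apply neg_le_neg
    exact mul_le_mul_of_nonneg_right hc hS0
  have hFabs : |Ff k α c x| = A * v ^ 2 * Real.exp (-(c * S)) := by
    apply abs_of_nonneg
    exact mul_nonneg (mul_nonneg hA0 (sq_nonneg v)) (Real.exp_nonneg _)
  rw [hFabs, bnd_eq]
  have hP0 : (0:ℝ) ≤ P := le_trans zero_le_one hP1
  calc (1 + S) * (A * v ^ 2 * Real.exp (-(c * S)))
      ≤ P * (A * P ^ (2 * Npairs k) * Real.exp (-(2⁻¹ * S))) := by
        apply mul_le_mul h1SP ?_ ?_ hP0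
        · apply mul_le_mul ?_ hexp (Real.exp_nonneg _)
            (mul_nonneg hA0 (pow_nonneg hP0 _))
          exact mul_le_mul_of_nonneg_left hvsq hA0
        · exact mul_nonneg (mul_nonneg hA0 (sq_nonneg v)) (Real.exp_nonneg _)
    _ = A * P ^ (2 * Npairs k + 1) * Real.exp (-(2⁻¹ * S)) := by ring

lemma Ff_integrableOn (k : ℕ) (α : ℝ) (hα : 0 < α) {c : ℝ} (hc : (2:ℝ)⁻¹ ≤ c) :
    IntegrableOn (Ff k α c) (Dset k) := by
  apply Integrable.mono' (bnd_int k α hα)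
    ((measurable_Ff k α c).aestronglyMeasurable)
  filter_upwards [ae_restrict_mem (measurableSet_Dset k)] with x hx
  have hS0 : 0 ≤ ∑ j, x j := Finset.sum_nonneg fun j _ => hx j (Set.mem_univ j)
  have h := key_bound k α hc hx
  have : |Ff k α c x| ≤ (1 + ∑ j, x j) * |Ff k α c x| := by
    nlinarith [abs_nonneg (Ff k α c x)]
  calc ‖Ff k α c x‖ = |Ff k α c x| := rfl
  _ ≤ (1 + ∑ j, x j) * |Ff k α c x| := this
  _ ≤ bnd k α x := h

/-! ### Scaling -/

lemma Dset_smul (k : ℕ) {c : ℝ} (hc : 0 < c) : c • Dset k = Dset k := by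
  unfold Dset
  rw [smul_univ_pi]
  refine Set.pi_congr rfl fun i _ => ?_
  show c • Set.Ici (0:ℝ) = _
  rw [LinearOrderedField.smul_Ici hc, mul_zero]

lemma scaling (k : ℕ) (α : ℝ) {c : ℝ} (hc : 0 < c) :
    ∫ x in Dset k, Ff k α c x
      = c ^ (-((k:ℝ) * ((k:ℝ) - 1 + α))) * ∫ x in Dset k, Ff k α 1 x := by
  have hB := Measure.setIntegral_comp_smul_of_pos volume (Ff k α 1) (Dset k) hc
  rw [Dset_smul k hc] at hB
  have hrank : Module.finrank ℝ (Fin k → ℝ) = k := by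
    simp [Module.finrank_fintype_fun_eq_card]
  rw [hrank] at hB
  have hA : ∀ x ∈ Dset k,
      Ff k α 1 (c • x) = (c ^ ((α - 1) * (k:ℝ)) * c ^ (2 * Npairs k)) * Ff k α c x := by
    intro x hx
    have hx' : ∀ j, 0 ≤ x j := fun j => hx j (Set.mem_univ j)
    unfold Ff Gf
    have hsmul : ∀ j, (c • x) j = c * x j := fun j => rfl
    have hprod : (∏ j, (c • x) j ^ (α - 1)) = c ^ ((α - 1) * (k:ℝ)) * ∏ j, x j ^ (α - 1) := by
      have : ∀ j : Fin k, (c • x) j ^ (α - 1) = c ^ (α - 1) * x j ^ (α - 1) := by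
        intro j
        rw [hsmul j, Real.mul_rpow hc.le (hx' j)]
      rw [Finset.prod_congr rfl fun j _ => this j, Finset.prod_mul_distrib,
        Finset.prod_const, Finset.card_univ, Fintype.card_fin,
        ← Real.rpow_natCast (c ^ (α - 1)) k, ← Real.rpow_mul hc.le]
    have hvand : (∏ p ∈ Finset.univ.filter (fun p : Fin k × Fin k => p.1 < p.2),
        ((c • x) p.2 - (c • x) p.1))
        = c ^ Npairs k * ∏ p ∈ Finset.univ.filter (fun p : Fin k × Fin k => p.1 < p.2),
            (x p.2 - x p.1) := by
      have : ∀ p : Fin k × Fin k, (c • x) p.2 - (c • x) p.1 = c * (x p.2 - x p.1) := by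
        intro p; rw [hsmul, hsmul]; ring
      rw [Finset.prod_congr rfl fun p _ => this p, Finset.prod_mul_distrib,
        Finset.prod_const]
      rfl
    have hsum : (∑ j, (c • x) j) = c * ∑ j, x j := by
      rw [Finset.mul_sum]; exact Finset.sum_congr rfl fun j _ => hsmul j
    rw [hprod, hvand, hsum, mul_pow, ← pow_mul, mul_comm (Npairs k) 2]
    ring_nf
  have hAint : ∫ x in Dset k, Ff k α 1 (c • x)
      = (c ^ ((α - 1) * (k:ℝ)) * c ^ (2 * Npairs k)) * ∫ x in Dset k, Ff k α c x := by
    rw [setIntegral_congr_fun (measurableSet_Dset k) hA]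
    exact integral_const_mul _ _
  rw [hAint] at hB
  -- hB : const * J c = (c ^ k)⁻¹ • J 1
  have hcne : ∀ y : ℝ, c ^ (y:ℝ) ≠ 0 := fun y => (Real.rpow_pos_of_pos hc y).ne'
  have hnp : (c : ℝ) ^ (2 * Npairs k) = c ^ ((2 * Npairs k : ℕ) : ℝ) :=
    (Real.rpow_natCast c _).symm
  have hkp : ((c : ℝ) ^ k)⁻¹ = c ^ (-(k:ℝ)) := by
    rw [Real.rpow_neg hc.le, Real.rpow_natCast]
  rw [hnp, hkp, smul_eq_mul, ← Real.rpow_add hc] at hB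
  have hiso : ∫ x in Dset k, Ff k α c x
      = c ^ (-((α - 1) * (k:ℝ) + (2 * Npairs k : ℕ))) *
        (c ^ ((α - 1) * (k:ℝ) + (2 * Npairs k : ℕ)) * ∫ x in Dset k, Ff k α c x) := by
    rw [← mul_assoc, ← Real.rpow_add hc, neg_add_cancel, Real.rpow_zero, one_mul]
  rw [hiso, hB, ← mul_assoc, ← Real.rpow_add hc]
  congr 2
  have hNk : (2 * Npairs k : ℝ) + k = k * k := by exact_mod_cast two_npairs k
  push_cast
  nlinarith [hNk]

/-! ### Differentiation in the parameter -/

lemma hasDeriv_Ff (k : ℕ) (α : ℝ) (x : Fin k → ℝ) (c : ℝ) :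
    HasDerivAt (fun c => Ff k α c x) (-((∑ j, x j) * Ff k α c x)) c := by
  unfold Ff
  have h1 : HasDerivAt (fun c : ℝ => -(c * ∑ j, x j)) (-(∑ j, x j)) c := by
    exact (hasDerivAt_mul_const (∑ j, x j)).neg
  have h2 := h1.exp
  have h3 := h2.const_mul (Gf k α x)
  refine h3.congr_deriv ?_
  ring

end Laguerre

open Laguerre in
/-- `⟨∑_j x_j⟩_{L;α} = k(k - 1 + α) ⟨1⟩_{L;α}`. -/
theorem laguerre_sum (k : ℕ) (α : ℝ) (hα : 0 < α) :
    ∫ x : Fin k → ℝ in Set.univ.pi fun _ : Fin k => Set.Ici (0 : ℝ),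
        (∑ j, x j) * laguerreWeight α x
      = (k : ℝ) * ((k : ℝ) - 1 + α) *
          ∫ x : Fin k → ℝ in Set.univ.pi fun _ : Fin k => Set.Ici (0 : ℝ),
            laguerreWeight α x := by
  classical
  have hμD := measurableSet_Dset k
  set p : ℝ := (k:ℝ) * ((k:ℝ) - 1 + α) with hp
  have hF'meas : AEStronglyMeasurable (fun x : Fin k → ℝ => -((∑ j, x j) * Ff k α 1 x))
      ((volume : Measure (Fin k → ℝ)).restrict (Dset k)) := by
    apply Measurable.aestronglyMeasurable
    exact ((Finset.measurable_sum _ fun j _ => measurable_pi_apply j).mul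
      (measurable_Ff k α 1)).neg
  have h_bound : ∀ᵐ x ∂((volume : Measure (Fin k → ℝ)).restrict (Dset k)),
      ∀ c ∈ Metric.ball (1:ℝ) 2⁻¹, ‖-((∑ j, x j) * Ff k α c x)‖ ≤ bnd k α x := by
    filter_upwards [ae_restrict_mem hμD] with x hx
    intro c hc
    have hc' : (2:ℝ)⁻¹ ≤ c := by
      have := abs_lt.1 (by simpa [Real.dist_eq] using hc)
      linarith [this.1]
    have hS0 : 0 ≤ ∑ j, x j := Finset.sum_nonneg fun j _ => hx j (Set.mem_univ j)
    have hkb := key_bound k α hc' hx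
    calc ‖-((∑ j, x j) * Ff k α c x)‖ = (∑ j, x j) * |Ff k α c x| := by
          rw [norm_neg]
          rw [Real.norm_eq_abs, abs_mul, abs_of_nonneg hS0]
      _ ≤ (1 + ∑ j, x j) * |Ff k α c x| := by
          apply mul_le_mul_of_nonneg_right (by linarith) (abs_nonneg _)
      _ ≤ bnd k α x := hkb
  have h_diff : ∀ᵐ x ∂((volume : Measure (Fin k → ℝ)).restrict (Dset k)),
      ∀ c ∈ Metric.ball (1:ℝ) 2⁻¹, HasDerivAt (fun c => Ff k α c x)
        (-((∑ j, x j) * Ff k α c x)) c :=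
    Filter.Eventually.of_forall fun x c _ => hasDeriv_Ff k α x c
  have key := hasDerivAt_integral_of_dominated_loc_of_deriv_le
    (μ := (volume : Measure (Fin k → ℝ)).restrict (Dset k))
    (F := fun c x => Ff k α c x)
    (F' := fun c x => -((∑ j, x j) * Ff k α c x))
    (x₀ := 1) (bound := bnd k α)
    (Metric.ball_mem_nhds (1:ℝ) (by norm_num : (0:ℝ) < 2⁻¹))
    (Filter.Eventually.of_forall fun c => (measurable_Ff k α c).aestronglyMeasurable)
    (Ff_integrableOn k α hα (by norm_num))
    hF'meas h_bound (bnd_int k α hα) h_diff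
  have hd1 := key.2
  -- the scaling derivative
  have heq : (fun c => ∫ x in Dset k, Ff k α c x)
      =ᶠ[nhds (1:ℝ)] fun c => c ^ (-p) * ∫ x in Dset k, Ff k α 1 x := by
    filter_upwards [Ioi_mem_nhds (show (0:ℝ) < 1 by norm_num)] with c hc
    exact scaling k α hc
  have hd2 : HasDerivAt (fun c : ℝ => c ^ (-p) * ∫ x in Dset k, Ff k α 1 x)
      (-p * ∫ x in Dset k, Ff k α 1 x) 1 := by
    have h := (Real.hasDerivAt_rpow_const (x := (1:ℝ)) (p := -p)
      (Or.inl one_ne_zero)).mul_const (∫ x in Dset k, Ff k α 1 x)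
    refine h.congr_deriv ?_
    rw [Real.one_rpow]
    ring
  have hd1' : HasDerivAt (fun c => ∫ x in Dset k, Ff k α c x)
      (-p * ∫ x in Dset k, Ff k α 1 x) 1 := hd2.congr_of_eventuallyEq heq
  have huniq := hd1.unique hd1'
  rw [integral_neg] at huniq
  have hmain : ∫ x in Dset k, (∑ j, x j) * Ff k α 1 x
      = p * ∫ x in Dset k, Ff k α 1 x := by linarith
  have hW : ∀ x : Fin k → ℝ, laguerreWeight α x = Ff k α 1 x := by
    intro x
    unfold laguerreWeight Ff Gf
    rw [one_mul]
  calc ∫ x : Fin k → ℝ in Set.univ.pi fun _ : Fin k => Set.Ici (0 : ℝ),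
        (∑ j, x j) * laguerreWeight α x
      = ∫ x in Dset k, (∑ j, x j) * Ff k α 1 x := by
        apply integral_congr_ae
        exact Filter.Eventually.of_forall fun x => by simp only [hW]
    _ = p * ∫ x in Dset k, Ff k α 1 x := hmain
    _ = (k : ℝ) * ((k : ℝ) - 1 + α) *
          ∫ x : Fin k → ℝ in Set.univ.pi fun _ : Fin k => Set.Ici (0 : ℝ),
            laguerreWeight α x := by
        rw [hp]
        congr 1
        apply integral_congr_ae
        exact Filter.Eventually.of_forall fun x => by simp only [hW]
end

section
/- With the Laguerre-weight Selberg functional ⟨f⟩_{L;α} as above (α > 0), one has ⟨(Σ_{j=1}^k x_j)^2⟩_{L;α} = (1 + k(k+α-1)) ⟨Σ_{j=1}^k x_j⟩_{L;α}. -/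
open Finset MeasureTheory

namespace LagAux

open Real Set

variable (k : ℕ) (α : ℝ)

/-- The sum of coordinates. -/
def S (x : Fin k → ℝ) : ℝ := ∑ j, x j

/-- The polynomial part of the Laguerre weight. -/
noncomputable def W (x : Fin k → ℝ) : ℝ :=
  (∏ j, x j ^ (α - 1)) *
    (∏ p ∈ Finset.univ.filter (fun p : Fin k × Fin k => p.1 < p.2), (x p.2 - x p.1)) ^ 2

/-- The domain `[0,∞)^k`. -/
def D : Set (Fin k → ℝ) := Set.univ.pi fun _ : Fin k => Set.Ici (0 : ℝ)

/-- The integrand `S^n · W · e^{-cS}`. -/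
noncomputable def itg (n : ℕ) (c : ℝ) (x : Fin k → ℝ) : ℝ :=
  S k x ^ n * W k α x * Real.exp (-(c * S k x))

/-- Number of ordered pairs `j < m`. -/
def P : ℕ := (Finset.univ.filter fun p : Fin k × Fin k => p.1 < p.2).card

lemma card_pairs : 2 * P k + k = k * k := by
  classical
  have hswap : ((univ : Finset (Fin k × Fin k)).filter fun p => p.2 < p.1).card
      = ((univ : Finset (Fin k × Fin k)).filter fun p => p.1 < p.2).card := by
    apply Finset.card_bij (fun p _ => Prod.swap p)
    · intro p hp; simp only [Finset.mem_filter, Finset.mem_univ, true_and] at hp ⊢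
      exact hp
    · intro p _ q _ h; exact Prod.swap_injective h
    · intro q hq
      refine ⟨Prod.swap q, ?_, by simp⟩
      simp only [Finset.mem_filter, Finset.mem_univ, true_and] at hq ⊢
      exact hq
  have hdisj : Disjoint ((univ : Finset (Fin k × Fin k)).filter fun p => p.1 < p.2)
      ((univ : Finset (Fin k × Fin k)).filter fun p => p.2 < p.1) := by
    rw [Finset.disjoint_left]
    intro p hp hq
    simp only [Finset.mem_filter] at hp hq
    exact absurd hq.2 (lt_asymm hp.2)
  have hunion : ((univ : Finset (Fin k × Fin k)).filter fun p => p.1 < p.2)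
      ∪ ((univ : Finset (Fin k × Fin k)).filter fun p => p.2 < p.1)
      = (univ : Finset (Fin k)).offDiag := by
    ext p
    simp only [Finset.mem_union, Finset.mem_filter, Finset.mem_univ, true_and,
      Finset.mem_offDiag, ne_eq]
    exact lt_or_lt_iff_ne
  have hcard := Finset.card_union_of_disjoint hdisj
  rw [hunion, hswap, Finset.offDiag_card, Finset.card_univ, Fintype.card_fin] at hcard
  have hk : k ≤ k * k := by
    rcases Nat.eq_zero_or_pos k with rfl | hk
    · simp
    · calc k = 1 * k := (one_mul k).symm
        _ ≤ k * k := Nat.mul_le_mul_right k hk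
  have : P k + P k = k * k - k := hcard.symm
  unfold P at *
  omega

lemma measurable_S : Measurable (S k) :=
  Finset.measurable_sum _ fun j _ => measurable_pi_apply j

lemma measurable_rpow_const (c : ℝ) : Measurable fun t : ℝ => t ^ c := by
  measurability

lemma measurable_W : Measurable (W k α) := by
  apply Measurable.mul
  · exact Finset.measurable_prod _ fun j _ =>
      (measurable_rpow_const (α - 1)).comp (measurable_pi_apply j)
  · exact (Finset.measurable_prod _ fun p _ =>
      (measurable_pi_apply p.2).sub (measurable_pi_apply p.1)).pow_const 2

lemma measurable_itg (n : ℕ) (c : ℝ) : Measurable (itg k α n c) := by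
  apply Measurable.mul
  · exact ((measurable_S k).pow_const n).mul (measurable_W k α)
  · exact (((measurable_S k).const_mul c).neg).exp

lemma measurableSet_D : MeasurableSet (D k) :=
  MeasurableSet.univ_pi fun _ => measurableSet_Ici

lemma g_int (hα : 0 < α) {b : ℝ} (hb : 0 < b) :
    Integrable ((Set.Ici (0:ℝ)).indicator fun t => t ^ (α - 1) * Real.exp (-(b * t))) := by
  rw [integrable_indicator_iff measurableSet_Ici, integrableOn_Ici_iff_integrableOn_Ioi]
  have h0 : IntegrableOn (fun u : ℝ => Real.exp (-u) * u ^ (α - 1)) (Ioi 0) :=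
    Real.GammaIntegral_convergent hα
  have h1 : IntegrableOn (fun t : ℝ => Real.exp (-(b * t)) * (b * t) ^ (α - 1)) (Ioi 0) := by
    have := (integrableOn_Ioi_comp_mul_left_iff
      (fun u : ℝ => Real.exp (-u) * u ^ (α - 1)) 0 hb).2 (by simpa using h0)
    simpa using this
  have h2 := h1.const_mul ((b : ℝ) ^ (α - 1))⁻¹
  apply IntegrableOn.congr_fun h2 ?_ measurableSet_Ioi
  intro t ht
  have ht' : (0:ℝ) < t := ht
  have hbne : (b : ℝ) ^ (α - 1) ≠ 0 := (Real.rpow_pos_of_pos hb _).ne'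
  show (b ^ (α - 1))⁻¹ * (Real.exp (-(b * t)) * (b * t) ^ (α - 1))
      = t ^ (α - 1) * Real.exp (-(b * t))
  rw [Real.mul_rpow hb.le ht'.le]
  field_simp
  try ring

lemma mem_D_nonneg {x : Fin k → ℝ} (hx : x ∈ D k) : ∀ j, 0 ≤ x j := by
  intro j
  exact hx j trivial

lemma S_nonneg {x : Fin k → ℝ} (hx : x ∈ D k) : 0 ≤ S k x :=
  Finset.sum_nonneg fun j _ => mem_D_nonneg k hx j

lemma W_nonneg {x : Fin k → ℝ} (hx : x ∈ D k) : 0 ≤ W k α x :=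
  mul_nonneg (Finset.prod_nonneg fun j _ => Real.rpow_nonneg (mem_D_nonneg k hx j) _)
    (sq_nonneg _)

lemma itg_nonneg (n : ℕ) (c : ℝ) {x : Fin k → ℝ} (hx : x ∈ D k) : 0 ≤ itg k α n c x :=
  mul_nonneg (mul_nonneg (pow_nonneg (S_nonneg k hx) n) (W_nonneg k α hx)) (Real.exp_nonneg _)

lemma itg_le (n : ℕ) {x : Fin k → ℝ} (hx : x ∈ D k) {b : ℝ} (hb : 0 < b) :
    itg k α n b x ≤ ((n + 2 * P k).factorial * (2 / b) ^ (n + 2 * P k)) *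
      ∏ j, (x j ^ (α - 1) * Real.exp (-(b / 2 * x j))) := by
  classical
  set N := n + 2 * P k with hN
  set C : ℝ := (N.factorial : ℝ) * (2 / b) ^ N with hC
  have hxj := mem_D_nonneg k hx
  have hS0 := S_nonneg k hx
  have hPr : 0 ≤ ∏ j, x j ^ (α - 1) :=
    Finset.prod_nonneg fun j _ => Real.rpow_nonneg (hxj j) _
  -- bound on the squared Vandermonde
  have hV2 : (∏ p ∈ Finset.univ.filter (fun p : Fin k × Fin k => p.1 < p.2),
      (x p.2 - x p.1)) ^ 2 ≤ S k x ^ (2 * P k) := by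
    rw [← Finset.prod_pow]
    calc (∏ p ∈ Finset.univ.filter (fun p : Fin k × Fin k => p.1 < p.2), (x p.2 - x p.1) ^ 2)
        ≤ ∏ p ∈ Finset.univ.filter (fun p : Fin k × Fin k => p.1 < p.2), S k x ^ 2 := by
          apply Finset.prod_le_prod (fun p _ => sq_nonneg _)
          intro p _
          have h2 : x p.2 ≤ S k x :=
            Finset.single_le_sum (fun j _ => hxj j) (Finset.mem_univ p.2)
          have h1 : x p.1 ≤ S k x :=
            Finset.single_le_sum (fun j _ => hxj j) (Finset.mem_univ p.1)
          apply sq_le_sq'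
          · nlinarith [hxj p.1, hxj p.2]
          · nlinarith [hxj p.1, hxj p.2]
      _ = S k x ^ (2 * P k) := by
          rw [Finset.prod_const, ← pow_mul]
          rfl
  -- bound S^N by C · exp((b/2)·S)
  have hSN : S k x ^ N ≤ C * Real.exp (b / 2 * S k x) := by
    have ht0 : 0 ≤ b / 2 * S k x := by positivity
    have h := Real.pow_div_factorial_le_exp _ ht0 N
    have hfac : (0:ℝ) < N.factorial := by positivity
    rw [div_le_iff₀ hfac] at h
    have hkey : (b / 2 * S k x) ^ N = (b / 2) ^ N * S k x ^ N := mul_pow _ _ _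
    rw [hkey] at h
    have h2 : S k x ^ N = (2 / b) ^ N * ((b / 2) ^ N * S k x ^ N) := by
      rw [← mul_assoc, ← mul_pow]
      field_simp
      simp
    rw [h2, hC]
    calc (2 / b) ^ N * ((b / 2) ^ N * S k x ^ N)
        ≤ (2 / b) ^ N * (Real.exp (b / 2 * S k x) * N.factorial) :=
          mul_le_mul_of_nonneg_left h (by positivity)
      _ = (N.factorial : ℝ) * (2 / b) ^ N * Real.exp (b / 2 * S k x) := by ring
  -- combine
  have hexp : Real.exp (b / 2 * S k x) * Real.exp (-(b * S k x))
      = Real.exp (-(b / 2 * S k x)) := by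
    rw [← Real.exp_add]; ring_nf
  have hprod : (∏ j, x j ^ (α - 1)) * Real.exp (-(b / 2 * S k x))
      = ∏ j, (x j ^ (α - 1) * Real.exp (-(b / 2 * x j))) := by
    rw [Finset.prod_mul_distrib, ← Real.exp_sum]
    congr 2
    rw [S, Finset.mul_sum]
    simp [Finset.sum_neg_distrib]
  calc itg k α n b x
      = (S k x ^ n * (∏ p ∈ Finset.univ.filter (fun p : Fin k × Fin k => p.1 < p.2),
          (x p.2 - x p.1)) ^ 2) * ((∏ j, x j ^ (α - 1)) * Real.exp (-(b * S k x))) := by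
        rw [itg, W]; ring
    _ ≤ (C * Real.exp (b / 2 * S k x)) * ((∏ j, x j ^ (α - 1)) * Real.exp (-(b * S k x))) := by
        apply mul_le_mul_of_nonneg_right _ (mul_nonneg hPr (Real.exp_nonneg _))
        calc S k x ^ n * (∏ p ∈ Finset.univ.filter (fun p : Fin k × Fin k => p.1 < p.2),
            (x p.2 - x p.1)) ^ 2
            ≤ S k x ^ n * S k x ^ (2 * P k) :=
              mul_le_mul_of_nonneg_left hV2 (pow_nonneg hS0 n)
          _ = S k x ^ N := by rw [← pow_add]
          _ ≤ C * Real.exp (b / 2 * S k x) := hSN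
    _ = C * ((∏ j, x j ^ (α - 1)) * (Real.exp (b / 2 * S k x) * Real.exp (-(b * S k x)))) := by
        ring
    _ = C * ∏ j, (x j ^ (α - 1) * Real.exp (-(b / 2 * x j))) := by
        rw [hexp, hprod]

lemma itg_integrableOn (hα : 0 < α) (n : ℕ) {b : ℝ} (hb : 0 < b) :
    IntegrableOn (itg k α n b) (D k) := by
  classical
  set C : ℝ := ((n + 2 * P k).factorial : ℝ) * (2 / b) ^ (n + 2 * P k) with hC
  have hC0 : 0 ≤ C := by positivity
  have hB : Integrable (fun x : Fin k → ℝ =>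
      C * ∏ j, (Set.Ici (0:ℝ)).indicator
        (fun t => t ^ (α - 1) * Real.exp (-(b / 2 * t))) (x j)) := by
    exact (Integrable.fintype_prod (𝕜 := ℝ)
      (f := fun _ : Fin k => (Set.Ici (0:ℝ)).indicator
        (fun t => t ^ (α - 1) * Real.exp (-(b / 2 * t))))
      (fun _ => g_int α hα (by positivity))).const_mul C
  refine Integrable.mono hB.restrict
    ((measurable_itg k α n b).aestronglyMeasurable) ?_
  rw [ae_restrict_iff' (measurableSet_D k)]
  filter_upwards with x hx
  have hxj := mem_D_nonneg k hx
  have hind : ∀ j, (Set.Ici (0:ℝ)).indicator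
      (fun t => t ^ (α - 1) * Real.exp (-(b / 2 * t))) (x j)
      = x j ^ (α - 1) * Real.exp (-(b / 2 * x j)) := fun j =>
    Set.indicator_of_mem (hxj j) _
  have hBx : 0 ≤ ∏ j, (x j ^ (α - 1) * Real.exp (-(b / 2 * x j))) :=
    Finset.prod_nonneg fun j _ =>
      mul_nonneg (Real.rpow_nonneg (hxj j) _) (Real.exp_nonneg _)
  have hle := itg_le k α n hx hb
  rw [Real.norm_eq_abs, Real.norm_eq_abs, abs_of_nonneg (itg_nonneg k α n b hx),
    abs_of_nonneg (by rw [Finset.prod_congr rfl fun j _ => hind j]; positivity)]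
  rw [Finset.prod_congr rfl fun j _ => hind j]
  exact hle

lemma smul_mem_D {c : ℝ} (hc : 0 < c) (x : Fin k → ℝ) : c • x ∈ D k ↔ x ∈ D k := by
  simp only [D, Set.mem_univ_pi, Pi.smul_apply, smul_eq_mul, Set.mem_Ici]
  constructor
  · intro h j
    have := h j
    nlinarith [this]
  · intro h j
    exact mul_nonneg hc.le (h j)

lemma itg_scale (n : ℕ) {c : ℝ} (hc : 0 < c) :
    ∫ x in D k, itg k α n c x
      = (c ^ ((α - 1) * k))⁻¹ * ((c ^ (n + 2 * P k + k : ℕ))⁻¹ *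
          ∫ x in D k, itg k α n 1 x) := by
  classical
  set K : ℝ := c ^ ((α - 1) * k) * c ^ (n + 2 * P k : ℕ) with hK
  have hK0 : 0 < K := mul_pos (Real.rpow_pos_of_pos hc _) (pow_pos hc _)
  have base := MeasureTheory.Measure.integral_comp_smul_of_nonneg (volume : Measure (Fin k → ℝ))
    ((D k).indicator (itg k α n 1)) c (hR := hc.le)
  rw [Module.finrank_fintype_fun_eq_card, Fintype.card_fin] at base
  have hfun : (fun x : Fin k → ℝ => (D k).indicator (itg k α n 1) (c • x))
      = (D k).indicator (fun x => K * itg k α n c x) := by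
    funext x
    by_cases hx : x ∈ D k
    · rw [Set.indicator_of_mem ((smul_mem_D k hc x).2 hx), Set.indicator_of_mem hx]
      have hxj := mem_D_nonneg k hx
      have h1 : (∏ j, (c • x) j ^ (α - 1)) = c ^ ((α - 1) * k) * ∏ j, x j ^ (α - 1) := by
        simp only [Pi.smul_apply, smul_eq_mul]
        rw [Finset.prod_congr rfl fun j _ => Real.mul_rpow hc.le (hxj j),
          Finset.prod_mul_distrib, Finset.prod_const, Finset.card_univ, Fintype.card_fin,
          ← Real.rpow_natCast (c ^ (α - 1)) k, ← Real.rpow_mul hc.le]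
      have h2 : (∏ p ∈ Finset.univ.filter (fun p : Fin k × Fin k => p.1 < p.2),
          ((c • x) p.2 - (c • x) p.1))
          = c ^ P k * ∏ p ∈ Finset.univ.filter (fun p : Fin k × Fin k => p.1 < p.2),
              (x p.2 - x p.1) := by
        simp only [Pi.smul_apply, smul_eq_mul]
        rw [Finset.prod_congr rfl fun p _ => (mul_sub c (x p.2) (x p.1)).symm,
          Finset.prod_mul_distrib, Finset.prod_const]
        rfl
      have h3 : S k (c • x) = c * S k x := by
        simp only [S, Pi.smul_apply, smul_eq_mul]
        rw [Finset.mul_sum]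
      rw [itg, itg, W, W, h1, h2, h3, hK]
      set A : ℝ := c ^ ((α - 1) * k) with hA
      rw [one_mul]
      ring
    · rw [Set.indicator_of_notMem (fun h => hx ((smul_mem_D k hc x).1 h)),
        Set.indicator_of_notMem hx]
  rw [hfun] at base
  rw [integral_indicator (measurableSet_D k), integral_indicator (measurableSet_D k)] at base
  rw [integral_const_mul] at base
  have hck : (0:ℝ) < c ^ k := pow_pos hc k
  rw [smul_eq_mul] at base
  have : ∫ x in D k, itg k α n c x = K⁻¹ * ((c ^ k)⁻¹ * ∫ x in D k, itg k α n 1 x) := by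
    rw [← base]
    field_simp
  rw [this, hK]
  rw [mul_inv]
  have : (c ^ (n + 2 * P k + k : ℕ) : ℝ) = c ^ (n + 2 * P k : ℕ) * c ^ k := by
    rw [← pow_add]
  rw [this, mul_inv]
  ring

lemma I_formula (n : ℕ) {c : ℝ} (hc : 0 < c) :
    ∫ x in D k, itg k α n c x
      = c ^ (-((α - 1) * k + (n + 2 * P k + k : ℕ))) * ∫ x in D k, itg k α n 1 x := by
  rw [itg_scale k α n hc]
  rw [Real.rpow_neg hc.le, Real.rpow_add hc, Real.rpow_natCast, mul_inv]
  ring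

lemma key (hα : 0 < α) :
    ∫ x in D k, itg k α 2 1 x
      = ((α - 1) * k + ((1 + 2 * P k + k : ℕ) : ℝ)) * ∫ x in D k, itg k α 1 1 x := by
  classical
  set e₁ : ℝ := (α - 1) * k + ((1 + 2 * P k + k : ℕ) : ℝ) with he₁
  set J1 : ℝ := ∫ x in D k, itg k α 1 1 x with hJ1
  have h1 : HasDerivAt (fun c : ℝ => c ^ (-e₁) * J1) (-e₁ * J1) 1 := by
    have := (Real.hasDerivAt_rpow_const (x := (1:ℝ)) (p := -e₁)
      (Or.inl one_ne_zero)).mul_const J1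
    simpa using this
  have heq : (fun c : ℝ => ∫ x in D k, itg k α 1 c x)
      =ᶠ[nhds (1:ℝ)] fun c => c ^ (-e₁) * J1 := by
    filter_upwards [isOpen_Ioi.mem_nhds (show (0:ℝ) < 1 by norm_num)] with c hc
    exact I_formula k α 1 hc
  have h2 : HasDerivAt (fun c : ℝ => ∫ x in D k, itg k α 1 c x) (-e₁ * J1) 1 :=
    h1.congr_of_eventuallyEq heq
  have h3 : HasDerivAt (fun c : ℝ => ∫ x in D k, itg k α 1 c x)
      (∫ x in D k, -(itg k α 2 1 x)) 1 := by
    have main := hasDerivAt_integral_of_dominated_loc_of_deriv_le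
      (μ := (volume : Measure (Fin k → ℝ)).restrict (D k))
      (F := fun c x => itg k α 1 c x) (F' := fun c x => -(itg k α 2 c x))
      (x₀ := (1:ℝ)) (bound := fun x => itg k α 2 (1/2) x)
      (s := Metric.ball 1 (1/2)) (Metric.ball_mem_nhds _ (by norm_num))
      (Filter.Eventually.of_forall fun c =>
        (measurable_itg k α 1 c).aestronglyMeasurable)
      (itg_integrableOn k α hα 1 one_pos)
      ((measurable_itg k α 2 1).neg.aestronglyMeasurable)
      ?_ (itg_integrableOn k α hα 2 (by norm_num)) ?_
    · exact main.2
    · filter_upwards [ae_restrict_mem (measurableSet_D k)] with x hx c hc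
      have hc' : 1/2 ≤ c := by
        rw [Metric.mem_ball, Real.dist_eq, abs_lt] at hc
        linarith
      have hS0 := S_nonneg k hx
      have hW0 := W_nonneg k α hx
      rw [norm_neg, Real.norm_eq_abs, abs_of_nonneg (itg_nonneg k α 2 c hx)]
      unfold itg
      apply mul_le_mul_of_nonneg_left _ (mul_nonneg (pow_nonneg hS0 2) hW0)
      apply Real.exp_le_exp.2
      rw [neg_le_neg_iff]
      apply mul_le_mul_of_nonneg_right _ hS0
      linarith
    · filter_upwards with x c _
      have hd : HasDerivAt (fun c : ℝ => Real.exp (-(c * S k x)))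
          (Real.exp (-(c * S k x)) * (-(S k x))) c := by
        exact ((hasDerivAt_mul_const (S k x)).neg).exp
      have := hd.const_mul (S k x ^ 1 * W k α x)
      refine this.congr_deriv ?_
      unfold itg
      ring
  have huniq := h3.unique h2
  rw [integral_neg] at huniq
  have : ∫ x in D k, itg k α 2 1 x = e₁ * J1 := by linarith
  simpa [he₁, hJ1] using this

end LagAux

/-- `⟨(∑_j x_j)²⟩_{L;α} = (1 + k(k + α - 1)) ⟨∑_j x_j⟩_{L;α}`. -/
theorem laguerre_sum_pow_two (k : ℕ) (α : ℝ) (hα : 0 < α) :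
    ∫ x : Fin k → ℝ in Set.univ.pi fun _ : Fin k => Set.Ici (0 : ℝ),
        (∑ j, x j) ^ 2 * laguerreWeight α x
      = (1 + (k : ℝ) * ((k : ℝ) + α - 1)) *
          ∫ x : Fin k → ℝ in Set.univ.pi fun _ : Fin k => Set.Ici (0 : ℝ),
            (∑ j, x j) * laguerreWeight α x := by
  classical
  have hrw2 : ∀ x : Fin k → ℝ,
      (∑ j, x j) ^ 2 * laguerreWeight α x = LagAux.itg k α 2 1 x := by
    intro x
    simp only [LagAux.itg, LagAux.S, LagAux.W, laguerreWeight, one_mul]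
    ring
  have hrw1 : ∀ x : Fin k → ℝ,
      (∑ j, x j) * laguerreWeight α x = LagAux.itg k α 1 1 x := by
    intro x
    simp only [LagAux.itg, LagAux.S, LagAux.W, laguerreWeight, one_mul, pow_one]
    ring
  calc ∫ x : Fin k → ℝ in Set.univ.pi fun _ : Fin k => Set.Ici (0 : ℝ),
        (∑ j, x j) ^ 2 * laguerreWeight α x
      = ∫ x in LagAux.D k, LagAux.itg k α 2 1 x := by
        apply integral_congr_ae
        filter_upwards with x
        exact hrw2 x
    _ = ((α - 1) * k + ((1 + 2 * LagAux.P k + k : ℕ) : ℝ)) *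
          ∫ x in LagAux.D k, LagAux.itg k α 1 1 x := LagAux.key k α hα
    _ = (1 + (k : ℝ) * ((k : ℝ) + α - 1)) *
          ∫ x : Fin k → ℝ in Set.univ.pi fun _ : Fin k => Set.Ici (0 : ℝ),
            (∑ j, x j) * laguerreWeight α x := by
        have hcongr : ∫ x in LagAux.D k, LagAux.itg k α 1 1 x
            = ∫ x : Fin k → ℝ in Set.univ.pi fun _ : Fin k => Set.Ici (0 : ℝ),
                (∑ j, x j) * laguerreWeight α x := by
          apply integral_congr_ae
          filter_upwards with x
          exact (hrw1 x).symm
        rw [hcongr]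
        congr 1
        have hc := LagAux.card_pairs k
        have hcast : 2 * (LagAux.P k : ℝ) + k = (k : ℝ) * k := by exact_mod_cast hc
        push_cast
        linear_combination hcast
end

section
/- The Selberg–Mehta integral evaluation: ∫_{ℝ^k} (Π_{1≤j<m≤k}(x_m - x_j))^2 e^{-Σ_{j=1}^k x_j^2/2} dx = (2π)^{k/2} Π_{j=1}^k j!. -/
open Finset MeasureTheory

namespace MehtaAux
open Polynomial

noncomputable def g (x : ℝ) : ℝ := Real.exp (-(x ^ 2 / 2))

lemma integrable_pow_mul_g (n : ℕ) : Integrable fun x : ℝ => x ^ n * g x := by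
  have h := integrable_rpow_mul_exp_neg_mul_sq (b := 1/2) (by norm_num)
    (s := n) (lt_of_lt_of_le (by norm_num) (Nat.cast_nonneg n))
  refine h.congr (Filter.Eventually.of_forall fun x => ?_)
  show x ^ (n:ℝ) * Real.exp (-(1/2) * x ^ 2) = x ^ n * g x
  rw [Real.rpow_natCast]
  unfold g
  ring_nf

lemma integrable_poly_mul_g (P : ℝ[X]) : Integrable fun x : ℝ => P.eval x * g x := by
  have : (fun x : ℝ => P.eval x * g x)
      = fun x : ℝ => ∑ i ∈ Finset.range (P.natDegree + 1), P.coeff i * (x ^ i * g x) := by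
    funext x
    rw [Polynomial.eval_eq_sum_range, Finset.sum_mul]
    simp [mul_assoc]
  rw [this]
  exact integrable_finset_sum _ fun i _ => (integrable_pow_mul_g i).const_mul _

lemma integral_g : ∫ x : ℝ, g x = Real.sqrt (2 * Real.pi) := by
  have h := integral_gaussian (1/2)
  rw [show Real.pi / (1/2) = 2 * Real.pi by ring] at h
  rw [← h]
  congr 1 with x
  unfold g
  ring_nf

noncomputable def H (n : ℕ) : ℝ[X] := (Polynomial.hermite n).map (Int.castRingHom ℝ)

lemma H_monic (n : ℕ) : (H n).Monic := (Polynomial.hermite_monic n).map _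

lemma H_natDegree (n : ℕ) : (H n).natDegree = n := by
  rw [H, Polynomial.natDegree_map_eq_of_injective Int.cast_injective]
  exact Polynomial.natDegree_hermite

lemma H_succ_eval (n : ℕ) (x : ℝ) :
    (H (n+1)).eval x = x * (H n).eval x - (derivative (H n)).eval x := by
  rw [H, Polynomial.hermite_succ, Polynomial.map_sub, Polynomial.map_mul, Polynomial.map_X,
    ← derivative_map]
  simp [H]

lemma hasDerivAt_Hg (n : ℕ) (x : ℝ) :
    HasDerivAt (fun y => (H n).eval y * g y) (-((H (n+1)).eval x * g x)) x := by
  have h1 : HasDerivAt (fun y : ℝ => (H n).eval y) ((derivative (H n)).eval x) x :=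
    (H n).hasDerivAt x
  have h2 : HasDerivAt g (-x * g x) x := by
    have hq : HasDerivAt (fun y : ℝ => -(y ^ 2 / 2)) (-x) x := by
      have := ((hasDerivAt_pow 2 x).div_const 2).neg
      refine this.congr_deriv ?_
      norm_num
    have := hq.exp
    unfold g
    convert this using 1
    ring
  have := h1.mul h2
  refine this.congr_deriv ?_
  rw [H_succ_eval]
  ring

lemma H_zero : H 0 = 1 := by
  rw [H, Polynomial.hermite_zero]; simp

lemma key (n : ℕ) (P : ℝ[X]) :
    ∫ x : ℝ, P.eval x * ((H n).eval x * g x)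
      = ∫ x : ℝ, (derivative^[n] P).eval x * g x := by
  induction n generalizing P with
  | zero => simp [H_zero]
  | succ n ih =>
    have hint : ∀ Q : ℝ[X], Integrable fun x : ℝ => Q.eval x * ((H n).eval x * g x) := by
      intro Q
      refine (integrable_poly_mul_g (Q * H n)).congr
        (Filter.Eventually.of_forall fun x => ?_)
      simp [mul_assoc]
    have hint1 : ∀ Q : ℝ[X], Integrable fun x : ℝ => Q.eval x * ((H (n+1)).eval x * g x) := by
      intro Q
      refine (integrable_poly_mul_g (Q * H (n+1))).congr
        (Filter.Eventually.of_forall fun x => ?_)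
      simp [mul_assoc]
    have ibp := integral_mul_deriv_eq_deriv_mul_of_integrable
      (u := fun x : ℝ => P.eval x) (u' := fun x : ℝ => (derivative P).eval x)
      (v := fun x : ℝ => (H n).eval x * g x)
      (v' := fun x : ℝ => -((H (n+1)).eval x * g x))
      (fun x _ => P.hasDerivAt x) (fun x _ => hasDerivAt_Hg n x)
      ((hint1 P).neg.congr (Filter.Eventually.of_forall fun x => by simp only [Pi.mul_apply, Pi.neg_apply]; ring))
      (by simpa [Pi.mul_def] using hint (derivative P))
      (by simpa [Pi.mul_def] using hint P)
    simp only [Pi.mul_apply, mul_neg] at ibp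
    rw [integral_neg, neg_inj] at ibp
    rw [ibp, ih (derivative P), ← Function.iterate_succ_apply]

lemma iterate_derivative_add' (n : ℕ) (p q : ℝ[X]) :
    derivative^[n] (p + q) = derivative^[n] p + derivative^[n] q := by
  induction n generalizing p q with
  | zero => simp
  | succ n ih => simp [Function.iterate_succ_apply, derivative_add, ih]

lemma iterate_derivative_H_self (n : ℕ) :
    derivative^[n] (H n) = Polynomial.C (n.factorial : ℝ) := by
  have hsplit : H n = (H n - X ^ n) + X ^ n := by ring
  have hd : derivative^[n] (H n - X ^ n) = 0 := by
    by_cases h : H n - X ^ n = 0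
    · simp [h]
    · apply Polynomial.iterate_derivative_eq_zero
      rw [Polynomial.natDegree_lt_iff_degree_lt h]
      have := Polynomial.degree_sub_lt (p := H n) (q := X ^ n)
        (by rw [Polynomial.degree_X_pow, Polynomial.degree_eq_natDegree (H_monic n).ne_zero,
          H_natDegree])
        (H_monic n).ne_zero
        (by rw [(H_monic n).leadingCoeff, Polynomial.monic_X_pow n |>.leadingCoeff])
      rwa [Polynomial.degree_eq_natDegree (H_monic n).ne_zero, H_natDegree] at this
  rw [hsplit, iterate_derivative_add', hd, zero_add,
    Polynomial.iterate_derivative_X_pow_eq_C_mul, Nat.sub_self, pow_zero, mul_one,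
    Nat.descFactorial_self]

lemma orth (m n : ℕ) :
    ∫ x : ℝ, (H m).eval x * ((H n).eval x * g x)
      = if m = n then (n.factorial : ℝ) * Real.sqrt (2 * Real.pi) else 0 := by
  have main : ∀ m n : ℕ, m ≤ n →
      ∫ x : ℝ, (H m).eval x * ((H n).eval x * g x)
        = if m = n then (n.factorial : ℝ) * Real.sqrt (2 * Real.pi) else 0 := by
    intro m n hmn
    rw [key n (H m)]
    rcases eq_or_lt_of_le hmn with rfl | hlt
    · rw [iterate_derivative_H_self]
      rw [if_pos rfl]
      simp only [Polynomial.eval_C]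
      rw [MeasureTheory.integral_const_mul, integral_g]
    · rw [Polynomial.iterate_derivative_eq_zero (by rw [H_natDegree]; exact hlt)]
      simp [hlt.ne]
  rcases le_total m n with h | h
  · exact main m n h
  · have := main n m h
    have hcomm : (fun x : ℝ => (H m).eval x * ((H n).eval x * g x))
        = fun x : ℝ => (H n).eval x * ((H m).eval x * g x) := by
      funext x; ring
    rw [hcomm, this]
    rcases eq_or_ne m n with rfl | hne
    · simp
    · simp [hne, Ne.symm hne]

lemma fact_prod (k : ℕ) :
    k.factorial * ∏ j ∈ Finset.range k, j.factorial
      = ∏ j ∈ Finset.range k, (j + 1).factorial := by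
  induction k with
  | zero => simp
  | succ k ih =>
    rw [Finset.prod_range_succ, Finset.prod_range_succ, ← ih, Nat.factorial_succ]
    ring

lemma prod_pairs {k : ℕ} (f : Fin k → Fin k → ℝ) :
    ∏ p ∈ Finset.univ.filter (fun p : Fin k × Fin k => p.1 < p.2), f p.1 p.2
      = ∏ i, ∏ j ∈ Finset.Ioi i, f i j := by
  rw [Finset.prod_sigma']
  refine Finset.prod_nbij' (fun p => ⟨p.1, p.2⟩) (fun s => (s.1, s.2)) ?_ ?_ ?_ ?_ ?_
  · intro p hp
    simp only [Finset.mem_filter, Finset.mem_univ, true_and] at hp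
    simp [Finset.mem_sigma, Finset.mem_Ioi, hp]
  · intro s hs
    simp only [Finset.mem_sigma, Finset.mem_univ, true_and, Finset.mem_Ioi] at hs
    simp [hs]
  · intro p _; rfl
  · intro s _; rfl
  · intro p _; rfl

end MehtaAux

open Finset MeasureTheory MehtaAux Polynomial

/-- The Selberg–Mehta integral evaluation:
`∫_{ℝ^k} (∏_{j<m}(x_m - x_j))² e^{-∑_j x_j²/2} dx = (2π)^{k/2} ∏_{j=1}^k j!`. -/
theorem selberg_mehta_integral (k : ℕ) :
    ∫ x : Fin k → ℝ,
        (∏ p ∈ Finset.univ.filter (fun p : Fin k × Fin k => p.1 < p.2), (x p.2 - x p.1)) ^ 2 *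
          Real.exp (-∑ j, x j ^ 2 / 2)
      = (2 * Real.pi) ^ ((k : ℝ) / 2) * ∏ j ∈ Finset.range k, ((j + 1).factorial : ℝ) := by
  classical
  set s : Equiv.Perm (Fin k) → ℝ := fun σ => ((Equiv.Perm.sign σ : ℤ) : ℝ) with hs
  set h : Equiv.Perm (Fin k) → Equiv.Perm (Fin k) → Fin k → ℝ → ℝ :=
    fun σ τ i y => (H (σ i : ℕ)).eval y * ((H (τ i : ℕ)).eval y * g y) with hh
  -- pointwise identity
  have hdet : ∀ x : Fin k → ℝ,
      (∏ p ∈ Finset.univ.filter (fun p : Fin k × Fin k => p.1 < p.2), (x p.2 - x p.1))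
        = ∑ σ : Equiv.Perm (Fin k), s σ * ∏ i, (H (σ i : ℕ)).eval (x i) := by
    intro x
    rw [prod_pairs (fun i j => x j - x i), ← Matrix.det_vandermonde,
      Matrix.det_eval_matrixOfPolynomials_eq_det_vandermonde x (fun j : Fin k => H (j : ℕ))
        (fun i => H_natDegree _) (fun i => H_monic _),
      ← Matrix.det_transpose, Matrix.det_apply']
    refine Finset.sum_congr rfl fun σ _ => ?_
    simp [Matrix.transpose_apply, hs]
  have hexp : ∀ x : Fin k → ℝ,
      Real.exp (-∑ j, x j ^ 2 / 2) = ∏ i, g (x i) := by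
    intro x
    rw [show (-∑ j, x j ^ 2 / 2) = ∑ j, -(x j ^ 2 / 2) by rw [← Finset.sum_neg_distrib],
      Real.exp_sum]
    rfl
  have hpoint : ∀ x : Fin k → ℝ,
      (∏ p ∈ Finset.univ.filter (fun p : Fin k × Fin k => p.1 < p.2), (x p.2 - x p.1)) ^ 2 *
          Real.exp (-∑ j, x j ^ 2 / 2)
        = ∑ σ : Equiv.Perm (Fin k), ∑ τ : Equiv.Perm (Fin k),
            (s σ * s τ) * ∏ i, h σ τ i (x i) := by
    intro x
    rw [hdet, hexp, sq, Finset.sum_mul_sum, Finset.sum_mul]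
    refine Finset.sum_congr rfl fun σ _ => ?_
    rw [Finset.sum_mul]
    refine Finset.sum_congr rfl fun τ _ => ?_
    simp only [hh, Finset.prod_mul_distrib]
    ring
  have hint : ∀ σ τ i, Integrable (h σ τ i) := by
    intro σ τ i
    refine (integrable_poly_mul_g (H (σ i : ℕ) * H (τ i : ℕ))).congr
      (Filter.Eventually.of_forall fun y => ?_)
    simp [hh, mul_assoc]
  have hFint : ∀ σ τ : Equiv.Perm (Fin k),
      Integrable (fun x : Fin k → ℝ => (s σ * s τ) * ∏ i, h σ τ i (x i)) :=
    fun σ τ => (Integrable.fintype_prod (𝕜 := ℝ) fun i => hint σ τ i).const_mul _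
  calc
    ∫ x : Fin k → ℝ,
        (∏ p ∈ Finset.univ.filter (fun p : Fin k × Fin k => p.1 < p.2), (x p.2 - x p.1)) ^ 2 *
          Real.exp (-∑ j, x j ^ 2 / 2)
      = ∫ x : Fin k → ℝ, ∑ σ : Equiv.Perm (Fin k), ∑ τ : Equiv.Perm (Fin k),
          (s σ * s τ) * ∏ i, h σ τ i (x i) := by
        exact integral_congr_ae (Filter.Eventually.of_forall fun x => hpoint x)
    _ = ∑ σ : Equiv.Perm (Fin k), ∑ τ : Equiv.Perm (Fin k),
          ∫ x : Fin k → ℝ, (s σ * s τ) * ∏ i, h σ τ i (x i) := by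
        rw [MeasureTheory.integral_finset_sum _
          (fun σ _ => integrable_finset_sum _ fun τ _ => hFint σ τ)]
        exact Finset.sum_congr rfl fun σ _ =>
          MeasureTheory.integral_finset_sum _ fun τ _ => hFint σ τ
    _ = ∑ σ : Equiv.Perm (Fin k), ∑ τ : Equiv.Perm (Fin k),
          (s σ * s τ) * ∏ i, ∫ y : ℝ, h σ τ i y := by
        refine Finset.sum_congr rfl fun σ _ => Finset.sum_congr rfl fun τ _ => ?_
        rw [MeasureTheory.integral_const_mul, integral_fintype_prod_volume_eq_prod (h σ τ)]
    _ = ∑ σ : Equiv.Perm (Fin k),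
          (∏ j ∈ Finset.range k, (j.factorial : ℝ)) * Real.sqrt (2 * Real.pi) ^ k := by
        refine Finset.sum_congr rfl fun σ _ => ?_
        rw [Finset.sum_eq_single_of_mem σ (Finset.mem_univ σ)]
        · have hss : s σ * s σ = 1 := by
            rw [hs]
            rw [← Int.cast_mul, ← Units.val_mul, Int.units_mul_self, Units.val_one, Int.cast_one]
          have hdiag : ∀ i : Fin k, ∫ y : ℝ, h σ σ i y
              = ((σ i : ℕ).factorial : ℝ) * Real.sqrt (2 * Real.pi) := by
            intro i
            rw [hh]
            rw [orth]
            simp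
          rw [hss, one_mul]
          rw [Finset.prod_congr rfl fun i _ => hdiag i, Finset.prod_mul_distrib,
            Finset.prod_const, Finset.card_univ, Fintype.card_fin]
          congr 1
          rw [Equiv.prod_comp σ (fun j : Fin k => ((j : ℕ).factorial : ℝ)),
            Fin.prod_univ_eq_prod_range (fun j => ((j).factorial : ℝ)) k]
        · intro τ _ hτ
          obtain ⟨i, hi⟩ : ∃ i, σ i ≠ τ i := by
            by_contra hc
            push_neg at hc
            exact hτ (Equiv.ext fun i => (hc i).symm)
          have : ∫ y : ℝ, h σ τ i y = 0 := by
            rw [hh, orth, if_neg]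
            exact fun hv => hi (Fin.val_injective hv)
          rw [Finset.prod_eq_zero (Finset.mem_univ i) this, mul_zero]
    _ = (2 * Real.pi) ^ ((k : ℝ) / 2) * ∏ j ∈ Finset.range k, ((j + 1).factorial : ℝ) := by
        rw [Finset.sum_const, Finset.card_univ, Fintype.card_perm, Fintype.card_fin,
          nsmul_eq_mul]
        have hpow : Real.sqrt (2 * Real.pi) ^ k = (2 * Real.pi) ^ ((k : ℝ) / 2) := by
          rw [Real.sqrt_eq_rpow, ← Real.rpow_natCast ((2 * Real.pi) ^ ((1 : ℝ)/2)) k,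
            ← Real.rpow_mul (by positivity)]
          congr 1
          ring
        rw [hpow]
        have := fact_prod k
        have hcast : (k.factorial : ℝ) * ∏ j ∈ Finset.range k, (j.factorial : ℝ)
            = ∏ j ∈ Finset.range k, ((j + 1).factorial : ℝ) := by
          exact_mod_cast congrArg (Nat.cast : ℕ → ℝ) this
        rw [← mul_assoc, hcast]
        ring
end

section
/- The Laguerre Selberg integral evaluation: for α > 0, ∫_{[0,∞)^k} (Π_{j=1}^k x_j^{α-1}) (Π_{1≤j<m≤k}(x_m - x_j))^2 e^{-Σ_j x_j} dx = Π_{j=0}^{k-1} (j+1)! · Γ(j+α). -/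
open Finset MeasureTheory Polynomial Set

namespace LagSel

noncomputable def w (α : ℝ) (x : ℝ) : ℝ := x ^ (α - 1) * Real.exp (-x)


lemma integrableOn_monomial {α : ℝ} (hα : 0 < α) (n : ℕ) :
    IntegrableOn (fun x => x ^ n * w α x) (Set.Ioi (0:ℝ)) := by
  have h : IntegrableOn (fun x : ℝ => Real.exp (-x) * x ^ ((n + α) - 1)) (Set.Ioi 0) :=
    Real.GammaIntegral_convergent (by positivity)
  refine h.congr_fun (fun x hx => ?_) measurableSet_Ioi
  have hx0 : (0:ℝ) < x := hx
  rw [w, show (n + α) - 1 = (n:ℝ) + (α - 1) by ring]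
  beta_reduce
  rw [Real.rpow_add hx0, Real.rpow_natCast]
  ring

lemma moment {α : ℝ} (hα : 0 < α) (n : ℕ) :
    ∫ x in Ioi (0:ℝ), x ^ n * w α x = Real.Gamma (α + n) := by
  rw [Real.Gamma_eq_integral (by positivity)]
  refine setIntegral_congr_fun measurableSet_Ioi (fun x hx => ?_)
  have hx0 : (0:ℝ) < x := hx
  rw [w, show (α + n) - 1 = (n:ℝ) + (α - 1) by ring, Real.rpow_add hx0,
    Real.rpow_natCast]
  ring

lemma Gamma_prod {x : ℝ} (hx : 0 < x) (m : ℕ) :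
    Real.Gamma (x + m) = Real.Gamma x * ∏ j ∈ range m, (x + j) := by
  induction m with
  | zero => simp
  | succ m ih =>
    rw [prod_range_succ, ← mul_assoc, ← ih, Nat.cast_succ, ← add_assoc,
      Real.Gamma_add_one (by positivity)]
    ring



noncomputable def lcoef (α : ℝ) (n i : ℕ) : ℝ :=
  (-1:ℝ)^(n+i) * (n.choose i) * (Real.Gamma (α+n) / Real.Gamma (α+i))

noncomputable def Lag (α : ℝ) (n : ℕ) : ℝ[X] :=
  ∑ i ∈ range (n+1), C (lcoef α n i) * X ^ i

lemma lcoef_self {α : ℝ} (hα : 0 < α) (n : ℕ) : lcoef α n n = 1 := by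
  rw [lcoef, Nat.choose_self, div_self (ne_of_gt (Real.Gamma_pos_of_pos (by positivity)))]
  rw [show n + n = 2*n by ring, pow_mul]
  norm_num

lemma Lag_coeff (α : ℝ) (n d : ℕ) (hd : d ≤ n) : (Lag α n).coeff d = lcoef α n d := by
  rw [Lag, finset_sum_coeff]
  simp only [coeff_C_mul, coeff_X_pow]
  rw [Finset.sum_eq_single d]
  · simp
  · intro b _ hb; simp [Ne.symm hb]
  · intro h; exact absurd (Finset.mem_range.mpr (Nat.lt_succ_of_le hd)) h

lemma Lag_natDegree_le (α : ℝ) (n : ℕ) : (Lag α n).natDegree ≤ n := by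
  refine Polynomial.natDegree_sum_le_of_forall_le _ _ fun i hi => ?_
  refine le_trans (natDegree_C_mul_le _ _) ?_
  simpa using Nat.lt_succ_iff.mp (Finset.mem_range.mp hi)

lemma Lag_monic {α : ℝ} (hα : 0 < α) (n : ℕ) : (Lag α n).Monic :=
  monic_of_natDegree_le_of_coeff_eq_one n (Lag_natDegree_le α n)
    (by rw [Lag_coeff α n n le_rfl, lcoef_self hα])

lemma Lag_natDegree {α : ℝ} (hα : 0 < α) (n : ℕ) : (Lag α n).natDegree = n := by
  refine le_antisymm (Lag_natDegree_le α n) (Polynomial.le_natDegree_of_ne_zero ?_)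
  rw [Lag_coeff α n n le_rfl, lcoef_self hα]
  norm_num

lemma Lag_eval (α : ℝ) (n : ℕ) (x : ℝ) :
    (Lag α n).eval x = ∑ i ∈ range (n+1), lcoef α n i * x ^ i := by
  rw [Lag, eval_finset_sum]
  simp


lemma fd_step (n : ℕ) (f : ℕ → ℝ) :
    ∑ i ∈ range (n+2), (-1:ℝ)^(n+1+i) * ((n+1).choose i) * f i
      = ∑ i ∈ range (n+1), (-1:ℝ)^(n+i) * (n.choose i) * (f (i+1) - f i) := by
  have hB : ∑ j ∈ range (n+2), (-1:ℝ)^(n+j+1) * (n.choose j) * f j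
      = (∑ i ∈ range (n+1), (-1:ℝ)^(n+i) * (n.choose (i+1)) * f (i+1))
          + (-1:ℝ)^(n+1) * f 0 := by
    rw [Finset.sum_range_succ']
    congr 1
    · refine Finset.sum_congr rfl fun i _ => ?_
      have : (-1:ℝ)^(n+(i+1)+1) = (-1:ℝ)^(n+i) := by
        rw [show n+(i+1)+1 = (n+i)+2 by ring, pow_add]; norm_num
      rw [this]
    · simp
  have hB2 : ∑ j ∈ range (n+2), (-1:ℝ)^(n+j+1) * (n.choose j) * f j
      = - ∑ j ∈ range (n+1), (-1:ℝ)^(n+j) * (n.choose j) * f j := by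
    rw [Finset.sum_range_succ, Nat.choose_succ_self]
    simp [pow_succ, ← Finset.sum_neg_distrib]
  have hA : ∑ i ∈ range (n+2), (-1:ℝ)^(n+1+i) * ((n+1).choose i) * f i
      = (∑ i ∈ range (n+1), (-1:ℝ)^(n+i) * ((n+1).choose (i+1)) * f (i+1))
          + (-1:ℝ)^(n+1) * f 0 := by
    rw [Finset.sum_range_succ']
    congr 1
    · refine Finset.sum_congr rfl fun i _ => ?_
      have : (-1:ℝ)^(n+1+(i+1)) = (-1:ℝ)^(n+i) := by
        rw [show n+1+(i+1) = (n+i)+2 by ring, pow_add]; norm_num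
      rw [this]
    · simp
  have hsplit : ∀ i, ((n+1).choose (i+1) : ℝ) = (n.choose i : ℝ) + (n.choose (i+1) : ℝ) := by
    intro i; rw [Nat.choose_succ_succ]; push_cast; ring
  calc ∑ i ∈ range (n+2), (-1:ℝ)^(n+1+i) * ((n+1).choose i) * f i
      = (∑ i ∈ range (n+1), ((-1:ℝ)^(n+i) * (n.choose i) * f (i+1)
            + (-1:ℝ)^(n+i) * (n.choose (i+1)) * f (i+1)))
          + (-1:ℝ)^(n+1) * f 0 := by
        rw [hA]; congr 1; refine Finset.sum_congr rfl fun i _ => ?_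
        rw [hsplit]; ring
    _ = (∑ i ∈ range (n+1), (-1:ℝ)^(n+i) * (n.choose i) * f (i+1))
          + ((∑ i ∈ range (n+1), (-1:ℝ)^(n+i) * (n.choose (i+1)) * f (i+1))
          + (-1:ℝ)^(n+1) * f 0) := by
        rw [Finset.sum_add_distrib]; ring
    _ = (∑ i ∈ range (n+1), (-1:ℝ)^(n+i) * (n.choose i) * f (i+1))
          - ∑ j ∈ range (n+1), (-1:ℝ)^(n+j) * (n.choose j) * f j := by
        rw [← hB, hB2]; ring
    _ = ∑ i ∈ range (n+1), (-1:ℝ)^(n+i) * (n.choose i) * (f (i+1) - f i) := by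
        rw [← Finset.sum_sub_distrib]
        refine Finset.sum_congr rfl fun i _ => by ring

lemma fd (n : ℕ) : ∀ (m : ℕ) (c : ℝ), m ≤ n →
    ∑ i ∈ range (n+1), (-1:ℝ)^(n+i) * (n.choose i) * (∏ j ∈ range m, (c + i + j))
      = if m = n then (n.factorial : ℝ) else 0 := by
  induction n with
  | zero =>
    intro m c hm
    interval_cases m
    simp
  | succ n ih =>
    intro m c hm
    rw [show n+1+1 = n+2 from rfl, fd_step]
    cases m with
    | zero =>
      simp
    | succ m =>
      have key : ∀ i : ℕ, (∏ j ∈ range (m+1), (c + (i+1:ℕ) + j))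
          - ∏ j ∈ range (m+1), (c + i + j)
          = (m+1) * ∏ j ∈ range m, ((c+1) + i + j) := by
        intro i
        rw [Finset.prod_range_succ, Finset.prod_range_succ']
        have e1 : ∀ j ∈ range m, (c + (i+1:ℕ) + j) = ((c+1) + i + j) := by
          intro j _; push_cast; ring
        have e2 : ∀ j ∈ range m, (c + i + ((j:ℕ)+1:ℕ)) = ((c+1) + i + j) := by
          intro j _; push_cast; ring
        rw [Finset.prod_congr rfl e1, Finset.prod_congr rfl e2]
        push_cast; ring
      calc ∑ i ∈ range (n+1), (-1:ℝ)^(n+i) * (n.choose i) *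
              ((∏ j ∈ range (m+1), (c + (i+1:ℕ) + j)) - ∏ j ∈ range (m+1), (c + i + j))
          = (m+1) * ∑ i ∈ range (n+1), (-1:ℝ)^(n+i) * (n.choose i) *
              (∏ j ∈ range m, ((c+1) + i + j)) := by
            rw [Finset.mul_sum]
            refine Finset.sum_congr rfl fun i _ => ?_
            rw [key i]; ring
        _ = (m+1) * (if m = n then (n.factorial : ℝ) else 0) := by
            rw [ih m (c+1) (Nat.lt_succ_iff.mp hm)]
        _ = if m + 1 = n + 1 then ((n+1).factorial : ℝ) else 0 := by
            by_cases h : m = n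
            · subst h
              simp only [if_pos rfl, Nat.factorial_succ]
              push_cast
              ring
            · simp [h, fun hc => h (Nat.succ_injective hc)]


lemma integrableOn_poly {α : ℝ} (hα : 0 < α) (p : ℝ[X]) :
    IntegrableOn (fun x => p.eval x * w α x) (Set.Ioi (0:ℝ)) := by
  have he : (fun x => p.eval x * w α x)
      = fun x => ∑ i ∈ range (p.natDegree+1), p.coeff i * (x^i * w α x) := by
    funext x
    rw [eval_eq_sum_range, Finset.sum_mul]
    exact Finset.sum_congr rfl fun i _ => by ring
  rw [he]
  exact integrable_finset_sum _ fun i _ => (integrableOn_monomial hα i).const_mul _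

lemma lag_mono {α : ℝ} (hα : 0 < α) {n m : ℕ} (hm : m ≤ n) :
    ∫ x in Ioi (0:ℝ), (Lag α n).eval x * x ^ m * w α x
      = if m = n then (n.factorial : ℝ) * Real.Gamma (α+n) else 0 := by
  have hre : ∀ x : ℝ, (Lag α n).eval x * x ^ m * w α x
      = ∑ i ∈ range (n+1), lcoef α n i * (x^(i+m) * w α x) := by
    intro x
    rw [Lag_eval, Finset.sum_mul, Finset.sum_mul]
    exact Finset.sum_congr rfl fun i _ => by rw [pow_add]; ring
  simp_rw [hre]
  rw [integral_finset_sum _ (fun i _ => ((integrableOn_monomial hα (i+m)).const_mul _))]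
  simp_rw [integral_const_mul]
  have hstep : ∀ i ∈ range (n+1), lcoef α n i * ∫ x in Ioi (0:ℝ), x^(i+m) * w α x
      = Real.Gamma (α+n) * ((-1:ℝ)^(n+i) * (n.choose i) * ∏ j ∈ range m, (α + i + j)) := by
    intro i _
    rw [moment hα (i+m),
      show α + ((i:ℕ)+m : ℕ) = (α + i) + m by push_cast; ring,
      Gamma_prod (by positivity) m, lcoef]
    have hne : Real.Gamma (α + i) ≠ 0 := ne_of_gt (Real.Gamma_pos_of_pos (by positivity))
    field_simp
  rw [Finset.sum_congr rfl hstep, ← Finset.mul_sum, fd n m α hm]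
  split_ifs <;> ring

lemma lag_lag_integrable {α : ℝ} (hα : 0 < α) (a b : ℕ) :
    IntegrableOn (fun x => (Lag α a).eval x * (Lag α b).eval x * w α x) (Set.Ioi (0:ℝ)) := by
  have := integrableOn_poly hα (Lag α a * Lag α b)
  simpa [Polynomial.eval_mul] using this

lemma lag_orth_le {α : ℝ} (hα : 0 < α) {a b : ℕ} (hba : b ≤ a) :
    ∫ x in Ioi (0:ℝ), (Lag α a).eval x * (Lag α b).eval x * w α x
      = if a = b then (a.factorial : ℝ) * Real.Gamma (α+a) else 0 := by
  have hre : ∀ x : ℝ, (Lag α a).eval x * (Lag α b).eval x * w α x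
      = ∑ i ∈ range (b+1), lcoef α b i * ((Lag α a).eval x * x^i * w α x) := by
    intro x
    rw [Lag_eval α b, Finset.mul_sum, Finset.sum_mul]
    exact Finset.sum_congr rfl fun i _ => by ring
  have hint : ∀ i : ℕ, IntegrableOn
      (fun x => (Lag α a).eval x * x^i * w α x) (Set.Ioi (0:ℝ)) := by
    intro i
    have := integrableOn_poly hα (Lag α a * X^i)
    simpa only [Polynomial.eval_mul, Polynomial.eval_pow, Polynomial.eval_X] using this
  simp_rw [hre]
  rw [integral_finset_sum _ (fun i _ => (hint i).const_mul _)]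
  simp_rw [integral_const_mul]
  have hstep : ∀ i ∈ range (b+1), lcoef α b i * ∫ x in Ioi (0:ℝ),
        (Lag α a).eval x * x^i * w α x
      = lcoef α b i * (if i = a then (a.factorial : ℝ) * Real.Gamma (α+a) else 0) := by
    intro i hi
    rw [lag_mono hα (le_trans (Nat.lt_succ_iff.mp (Finset.mem_range.mp hi)) hba)]
  rw [Finset.sum_congr rfl hstep]
  by_cases hab : a = b
  · subst hab
    rw [Finset.sum_eq_single a]
    · simp [lcoef_self hα]
    · intro i _ hia; simp [hia]
    · intro h; exact absurd (Finset.mem_range.mpr (Nat.lt_succ_self a)) h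
  · rw [if_neg hab, Finset.sum_eq_zero]
    intro i hi
    have : i ≠ a := by
      have := Nat.lt_succ_iff.mp (Finset.mem_range.mp hi)
      omega
    simp [this]

lemma lag_orth {α : ℝ} (hα : 0 < α) (a b : ℕ) :
    ∫ x in Ioi (0:ℝ), (Lag α a).eval x * (Lag α b).eval x * w α x
      = if a = b then (a.factorial : ℝ) * Real.Gamma (α+a) else 0 := by
  rcases le_total b a with h | h
  · exact lag_orth_le hα h
  · have hswap : ∀ x : ℝ, (Lag α a).eval x * (Lag α b).eval x * w α x
        = (Lag α b).eval x * (Lag α a).eval x * w α x := fun x => by ring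
    simp_rw [hswap]
    rw [lag_orth_le hα h]
    by_cases hab : a = b
    · subst hab; simp
    · simp [hab, Ne.symm hab]


lemma restrict_pi (k : ℕ) :
    (volume : Measure (Fin k → ℝ)).restrict (Set.pi Set.univ fun _ => Set.Ici 0)
      = Measure.pi (fun _ : Fin k => volume.restrict (Set.Ici 0)) := by
  refine (Measure.pi_eq (μ := fun _ : Fin k => (volume : Measure ℝ).restrict (Set.Ici 0)) fun s hs => ?_).symm
  rw [Measure.restrict_apply (MeasurableSet.univ_pi hs), ← Set.pi_inter_distrib,
    volume_pi, Measure.pi_pi]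
  exact Finset.prod_congr rfl fun i _ => (Measure.restrict_apply (hs i)).symm

lemma integrableOn_pi_prod {k : ℕ} (f : Fin k → ℝ → ℝ)
    (hf : ∀ i, Integrable (f i) (volume.restrict (Set.Ici 0))) :
    IntegrableOn (fun x : Fin k → ℝ => ∏ i, f i (x i))
      (Set.pi Set.univ fun _ => Set.Ici 0) := by
  rw [IntegrableOn, restrict_pi]
  letI : MeasureSpace ℝ := ⟨volume.restrict (Set.Ici 0)⟩
  haveI : SigmaFinite (volume : Measure ℝ) := Restrict.sigmaFinite _ _
  exact Integrable.fintype_prod hf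

lemma integral_pi_prod {k : ℕ} (f : Fin k → ℝ → ℝ)
    (hf : ∀ i, Integrable (f i) (volume.restrict (Set.Ici 0))) :
    ∫ x : Fin k → ℝ in Set.pi Set.univ (fun _ => Set.Ici 0), ∏ i, f i (x i)
      = ∏ i, ∫ x in Set.Ici (0:ℝ), f i x := by
  rw [show (∫ x : Fin k → ℝ in Set.pi Set.univ (fun _ => Set.Ici 0), ∏ i, f i (x i))
      = ∫ x : Fin k → ℝ, (∏ i, f i (x i))
          ∂((volume : Measure (Fin k → ℝ)).restrict (Set.pi Set.univ fun _ => Set.Ici 0))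
      from rfl, restrict_pi]
  letI : MeasureSpace ℝ := ⟨volume.restrict (Set.Ici 0)⟩
  haveI : SigmaFinite (volume : Measure ℝ) := Restrict.sigmaFinite _ _
  exact MeasureTheory.integral_fintype_prod_eq_prod (ι := Fin k) f


lemma prod_pairs {k : ℕ} (f : Fin k → Fin k → ℝ) :
    ∏ p ∈ Finset.univ.filter (fun p : Fin k × Fin k => p.1 < p.2), f p.1 p.2
      = ∏ i : Fin k, ∏ j ∈ Finset.Ioi i, f i j := by
  rw [Finset.prod_sigma' Finset.univ (fun i => Finset.Ioi i) (fun i j => f i j)]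
  refine Finset.prod_nbij' (fun p => ⟨p.1, p.2⟩) (fun s => (s.1, s.2)) ?_ ?_ ?_ ?_ ?_
  · intro p hp
    simp only [Finset.mem_sigma, Finset.mem_univ, Finset.mem_Ioi, true_and]
    exact (Finset.mem_filter.mp hp).2
  · intro s hs
    simp only [Finset.mem_sigma, Finset.mem_univ, Finset.mem_Ioi, true_and] at hs
    exact Finset.mem_filter.mpr ⟨Finset.mem_univ _, hs⟩
  · intro p _; rfl
  · intro s _; rfl
  · intro p _; rfl


lemma det_expand {k : ℕ} {α : ℝ} (hα : 0 < α) (x : Fin k → ℝ) :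
    ∏ i : Fin k, ∏ j ∈ Finset.Ioi i, (x j - x i)
      = ∑ σ : Equiv.Perm (Fin k),
          ((Equiv.Perm.sign σ : ℤ) : ℝ) * ∏ i, (Lag α (σ i)).eval (x i) := by
  rw [← Matrix.det_vandermonde x,
    Matrix.det_eval_matrixOfPolynomials_eq_det_vandermonde x (fun i => Lag α i)
      (fun i => Lag_natDegree hα i) (fun i => Lag_monic hα i),
    ← Matrix.det_transpose, Matrix.det_apply]
  refine Finset.sum_congr rfl fun σ _ => ?_
  simp only [Matrix.transpose_apply, Matrix.of_apply, Units.smul_def, zsmul_eq_mul]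

lemma g_integrable {α : ℝ} (hα : 0 < α) (a b : ℕ) :
    Integrable (fun t => (Lag α a).eval t * (Lag α b).eval t * w α t)
      (volume.restrict (Set.Ici 0)) := by
  rw [← IntegrableOn, integrableOn_Ici_iff_integrableOn_Ioi]
  exact lag_lag_integrable hα a b

lemma g_integral {α : ℝ} (hα : 0 < α) (a b : ℕ) :
    ∫ t in Set.Ici (0:ℝ), (Lag α a).eval t * (Lag α b).eval t * w α t
      = if a = b then (a.factorial : ℝ) * Real.Gamma (α + a) else 0 := by
  rw [MeasureTheory.integral_Ici_eq_integral_Ioi, lag_orth hα a b]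

lemma eps_sq (k : ℕ) (σ : Equiv.Perm (Fin k)) :
    ((Equiv.Perm.sign σ : ℤ) : ℝ) * ((Equiv.Perm.sign σ : ℤ) : ℝ) = 1 := by
  rcases Int.isUnit_iff.mp (Equiv.Perm.sign σ).isUnit with h | h <;> rw [h] <;> norm_num


end LagSel

open LagSel in
set_option maxHeartbeats 2000000 in
/-- The Laguerre Selberg integral evaluation: for `α > 0`,
`∫_{[0,∞)^k} (∏_j x_j^{α-1}) (∏_{j<m}(x_m - x_j))² e^{-∑_j x_j} dx
  = ∏_{j=0}^{k-1} (j+1)! Γ(j+α)`. -/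
theorem laguerre_selberg_integral (k : ℕ) (α : ℝ) (hα : 0 < α) :
    ∫ x : Fin k → ℝ in Set.univ.pi fun _ : Fin k => Set.Ici (0 : ℝ),
        (∏ j, x j ^ (α - 1)) *
          (∏ p ∈ Finset.univ.filter (fun p : Fin k × Fin k => p.1 < p.2), (x p.2 - x p.1)) ^ 2 *
          Real.exp (-∑ j, x j)
      = ∏ j ∈ Finset.range k, (((j + 1).factorial : ℝ) * Real.Gamma ((j : ℝ) + α)) := by
  classical
  have key : ∀ x : Fin k → ℝ,
      (∏ j, x j ^ (α - 1)) *
          (∏ p ∈ Finset.univ.filter (fun p : Fin k × Fin k => p.1 < p.2), (x p.2 - x p.1)) ^ 2 *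
          Real.exp (-∑ j, x j)
      = ∑ p : Equiv.Perm (Fin k) × Equiv.Perm (Fin k),
          (((Equiv.Perm.sign p.1 : ℤ) : ℝ) * ((Equiv.Perm.sign p.2 : ℤ) : ℝ)) *
            ∏ i, ((Lag α (p.1 i)).eval (x i) * (Lag α (p.2 i)).eval (x i) * w α (x i)) := by
    intro x
    have hw : (∏ j, x j ^ (α - 1)) * Real.exp (-∑ j, x j) = ∏ j, w α (x j) := by
      rw [show (-∑ j, x j) = ∑ j, -(x j) by rw [← Finset.sum_neg_distrib],
        Real.exp_sum, ← Finset.prod_mul_distrib]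
      rfl
    rw [show (∏ p ∈ Finset.univ.filter (fun p : Fin k × Fin k => p.1 < p.2), (x p.2 - x p.1))
        = ∑ σ : Equiv.Perm (Fin k),
            ((Equiv.Perm.sign σ : ℤ) : ℝ) * ∏ i, (Lag α (σ i)).eval (x i) from by
      rw [prod_pairs (fun i j => x j - x i), det_expand hα x]]
    rw [sq, Finset.sum_mul_sum, ← Fintype.sum_prod_type']
    rw [mul_comm _ (Real.exp _), ← mul_assoc,
      mul_comm (Real.exp _) (∏ j, x j ^ (α - 1)), hw, Finset.mul_sum]
    refine Finset.sum_congr rfl fun p _ => ?_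
    rw [Finset.prod_mul_distrib, Finset.prod_mul_distrib]
    ring
  simp only [key]
  have hint : ∀ p ∈ (Finset.univ : Finset (Equiv.Perm (Fin k) × Equiv.Perm (Fin k))),
      Integrable (fun x : Fin k → ℝ =>
        (((Equiv.Perm.sign p.1 : ℤ) : ℝ) * ((Equiv.Perm.sign p.2 : ℤ) : ℝ)) *
          ∏ i, ((Lag α (p.1 i)).eval (x i) * (Lag α (p.2 i)).eval (x i) * w α (x i)))
        ((volume : Measure (Fin k → ℝ)).restrict (Set.univ.pi fun _ : Fin k => Set.Ici 0)) :=
    fun p _ => ((integrableOn_pi_prod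
      (fun i t => (Lag α (p.1 i)).eval t * (Lag α (p.2 i)).eval t * w α t)
      (fun i => g_integrable hα (p.1 i) (p.2 i))).const_mul _)
  rw [MeasureTheory.integral_finset_sum _ hint]
  have hterm : ∀ p : Equiv.Perm (Fin k) × Equiv.Perm (Fin k),
      (∫ x : Fin k → ℝ in Set.univ.pi fun _ : Fin k => Set.Ici (0:ℝ),
        (((Equiv.Perm.sign p.1 : ℤ) : ℝ) * ((Equiv.Perm.sign p.2 : ℤ) : ℝ)) *
          ∏ i, ((Lag α (p.1 i)).eval (x i) * (Lag α (p.2 i)).eval (x i) * w α (x i)))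
      = (((Equiv.Perm.sign p.1 : ℤ) : ℝ) * ((Equiv.Perm.sign p.2 : ℤ) : ℝ)) *
          ∏ i, (if ((p.1 i : ℕ)) = ((p.2 i : ℕ))
            then (((p.1 i : ℕ).factorial : ℝ) * Real.Gamma (α + (p.1 i : ℕ))) else 0) := by
    intro p
    rw [MeasureTheory.integral_const_mul,
      integral_pi_prod (fun i t => (Lag α (p.1 i)).eval t * (Lag α (p.2 i)).eval t * w α t)
        (fun i => g_integrable hα (p.1 i) (p.2 i))]
    congr 1
    exact Finset.prod_congr rfl fun i _ => g_integral hα (p.1 i) (p.2 i)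
  rw [Finset.sum_congr rfl fun p _ => hterm p]
  rw [Fintype.sum_prod_type]
  have hdiag : ∀ σ : Equiv.Perm (Fin k),
      (∑ τ : Equiv.Perm (Fin k),
        (((Equiv.Perm.sign σ : ℤ) : ℝ) * ((Equiv.Perm.sign τ : ℤ) : ℝ)) *
          ∏ i, (if ((σ i : ℕ)) = ((τ i : ℕ))
            then (((σ i : ℕ).factorial : ℝ) * Real.Gamma (α + (σ i : ℕ))) else 0))
      = ∏ i : Fin k, (((i : ℕ).factorial : ℝ) * Real.Gamma (α + (i : ℕ))) := by
    intro σ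
    rw [Finset.sum_eq_single σ]
    · rw [eps_sq, one_mul]
      rw [show (∏ i, (if ((σ i : ℕ)) = ((σ i : ℕ))
            then (((σ i : ℕ).factorial : ℝ) * Real.Gamma (α + (σ i : ℕ))) else 0))
          = ∏ i, (((σ i : ℕ).factorial : ℝ) * Real.Gamma (α + (σ i : ℕ))) from
        Finset.prod_congr rfl fun i _ => if_pos rfl]
      exact Equiv.prod_comp σ (fun i : Fin k => (((i : ℕ).factorial : ℝ) * Real.Gamma (α + (i : ℕ))))
    · intro τ _ hτ
      obtain ⟨i, hi⟩ : ∃ i, σ i ≠ τ i := by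
        by_contra h
        push_neg at h
        exact hτ (Equiv.ext h).symm
      have hz : (∏ i : Fin k, (if ((σ i : ℕ)) = ((τ i : ℕ))
          then (((σ i : ℕ).factorial : ℝ) * Real.Gamma (α + (σ i : ℕ))) else 0)) = 0 :=
        Finset.prod_eq_zero (Finset.mem_univ i) (if_neg (fun h => hi (Fin.val_injective h)))
      rw [hz, mul_zero]
    · intro h; exact absurd (Finset.mem_univ σ) h
  rw [Finset.sum_congr rfl fun σ _ => hdiag σ, Finset.sum_const, Finset.card_univ,
    Fintype.card_perm, Fintype.card_fin, nsmul_eq_mul]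
  rw [Fin.prod_univ_eq_prod_range (fun j => ((j.factorial : ℝ) * Real.Gamma (α + j)))]
  calc (k.factorial : ℝ) * ∏ j ∈ Finset.range k, ((j.factorial : ℝ) * Real.Gamma (α + j))
      = (∏ j ∈ Finset.range k, ((j:ℝ) + 1)) *
          ∏ j ∈ Finset.range k, ((j.factorial : ℝ) * Real.Gamma (α + j)) := by
        rw [show (∏ j ∈ Finset.range k, ((j:ℝ) + 1)) = (k.factorial : ℝ) from by
          rw [← Finset.prod_range_add_one_eq_factorial, Nat.cast_prod]
          push_cast
          rfl]
    _ = ∏ j ∈ Finset.range k, (((j:ℝ) + 1) * ((j.factorial : ℝ) * Real.Gamma (α + j))) :=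
        Finset.prod_mul_distrib.symm
    _ = ∏ j ∈ Finset.range k, (((j + 1).factorial : ℝ) * Real.Gamma ((j : ℝ) + α)) :=
        Finset.prod_congr rfl fun j _ => by
          rw [Nat.factorial_succ, add_comm α (j:ℝ)]; push_cast; ring
end
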